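/- arXiv:1402.2437 — 10 statements merged into one kernel-verified Lean document; each statement's English description precedes it below -/
import Mathlib

section
/- First-fit (the greedy on-line coloring algorithm that assigns each new vertex the least positive integer not used on its previously presented neighbors) uses at most ⌊log₂ n⌋ + 1 colors on any forest with n vertices, presented in any order. -/
/-!
A vertex `v` of color `c` has earlier neighbours `w₀, …, w_{c-1}` of colors `0, …, c-1`. Let
`C(x) = lowerComponent x` be the component of `x` in the subgraph induced on the vertices presented
up to `x`. The sets `C(wₖ)` lie in `C(v) \ {v}`, and they are pairwise disjoint because a vertex
common to two of them would close a cycle through `v`. By induction `|C(x)| ≥ 2 ^ col x`, since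
`1 + ∑_{k<c} 2 ^ k = 2 ^ c`; hence `2 ^ c ≤ n`.
-/

open Finset

namespace SimpleGraph

variable {V : Type*} {G : SimpleGraph V}

theorem IsAcyclic.mem_support_of_adj_of_adj (hG : G.IsAcyclic) {a b v : V} (ha : G.Adj a v)
    (hb : G.Adj v b) (hab : a ≠ b) (p : G.Walk a b) : v ∈ p.support := by
  classical
  by_contra hv
  have hb_mem := hG.mem_support_of_ne_mem_support_of_adj_of_isPath (Path.singleton ha).isPath
    p.bypass_isPath hb (fun h ↦ hv (p.support_bypass_subset_support h))
  simp only [Path.singleton, Walk.support_cons, Walk.support_nil, List.mem_cons,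
    List.not_mem_nil, or_false] at hb_mem
  rcases hb_mem with rfl | rfl
  · exact hab rfl
  · exact hb.ne rfl

theorem exists_lt_adj_of_lt_sInf_firstFit [LT V] {col : V → ℕ}
    (hgreedy : ∀ v, col v = sInf {c | ∀ u, u < v → G.Adj u v → col u ≠ c}) {k : ℕ}
    {v : V} (hk : k < col v) : ∃ u < v, G.Adj u v ∧ col u = k := by
  rw [hgreedy v] at hk
  simpa using Nat.notMem_of_lt_sInf hk

variable [Preorder V] [Fintype V]

open Classical in
noncomputable def lowerComponent (G : SimpleGraph V) (v : V) : Finset V :=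
  {x | ∃ p : G.Walk v x, ∀ y ∈ p.support, y ≤ v}

variable {v w x : V}

theorem mem_lowerComponent :
    x ∈ G.lowerComponent v ↔ ∃ p : G.Walk v x, ∀ y ∈ p.support, y ≤ v := by
  simp [lowerComponent]

theorem self_mem_lowerComponent : v ∈ G.lowerComponent v :=
  mem_lowerComponent.2 ⟨.nil, by simp⟩

theorem le_of_mem_lowerComponent (hx : x ∈ G.lowerComponent v) : x ≤ v := by
  obtain ⟨p, hp⟩ := mem_lowerComponent.1 hx
  exact hp x p.end_mem_support

theorem lowerComponent_subset_of_adj (hadj : G.Adj w v) (hwv : w < v) :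
    G.lowerComponent w ⊆ G.lowerComponent v := by
  intro x hx
  obtain ⟨p, hp⟩ := mem_lowerComponent.1 hx
  refine mem_lowerComponent.2 ⟨.cons hadj.symm p, fun y hy ↦ ?_⟩
  rcases List.mem_cons.1 (Walk.support_cons _ _ ▸ hy) with rfl | hy
  · exact le_rfl
  · exact (hp y hy).trans hwv.le

theorem IsAcyclic.disjoint_lowerComponent (hG : G.IsAcyclic) {a b : V} (ha : G.Adj a v)
    (hb : G.Adj b v) (hav : a < v) (hbv : b < v) (hab : a ≠ b) :
    Disjoint (G.lowerComponent a) (G.lowerComponent b) := by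
  refine Finset.disjoint_left.2 fun x hxa hxb ↦ ?_
  obtain ⟨p, hp⟩ := mem_lowerComponent.1 hxa
  obtain ⟨q, hq⟩ := mem_lowerComponent.1 hxb
  have hv := hG.mem_support_of_adj_of_adj ha hb.symm hab (p.append q.reverse)
  rw [Walk.mem_support_append_iff, Walk.support_reverse, List.mem_reverse] at hv
  rcases hv with hv | hv
  · exact (hp v hv).not_gt hav
  · exact (hq v hv).not_gt hbv

theorem IsAcyclic.two_pow_le_card_lowerComponent (hG : G.IsAcyclic) {col : V → ℕ}
    (hcol : ∀ v, ∀ k < col v, ∃ u < v, G.Adj u v ∧ col u = k) (v : V) :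
    2 ^ col v ≤ #(G.lowerComponent v) := by
  classical
  induction v using WellFoundedLT.induction with
  | _ v ih =>
  choose w hw_lt hw_adj hw_col using fun k : Fin (col v) ↦ hcol v k k.isLt
  have hdisj : Set.PairwiseDisjoint ↑(univ : Finset (Fin (col v))) (G.lowerComponent ∘ w) :=
    fun j _ k _ hjk ↦ hG.disjoint_lowerComponent (hw_adj j) (hw_adj k) (hw_lt j) (hw_lt k)
      fun h ↦ hjk (Fin.ext (by rw [← hw_col j, ← hw_col k, h]))
  have hv : v ∉ univ.biUnion (G.lowerComponent ∘ w) := by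
    simp only [mem_biUnion, mem_univ, true_and, Function.comp_apply, not_exists]
    exact fun k hk ↦ (le_of_mem_lowerComponent hk).not_gt (hw_lt k)
  have hsub : insert v (univ.biUnion (G.lowerComponent ∘ w)) ⊆ G.lowerComponent v :=
    insert_subset self_mem_lowerComponent
      (biUnion_subset.2 fun k _ ↦ lowerComponent_subset_of_adj (hw_adj k) (hw_lt k))
  calc 2 ^ col v = ∑ k : Fin (col v), 2 ^ (k : ℕ) + 1 := by
        rw [Fin.sum_univ_eq_sum_range (2 ^ ·), Nat.geomSum_eq le_rfl]
        have := Nat.one_le_two_pow (n := col v)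
        omega
    _ ≤ ∑ k, #(G.lowerComponent (w k)) + 1 := by
        gcongr with k
        simpa only [hw_col] using ih (w k) (hw_lt k)
    _ = #(insert v (univ.biUnion (G.lowerComponent ∘ w))) := by
        rw [card_insert_of_notMem hv, card_biUnion hdisj]
        rfl
    _ ≤ #(G.lowerComponent v) := card_le_card hsub

end SimpleGraph

/-- **First-fit on forests.**  Let `G` be a forest (acyclic simple graph) on the
vertex set `Fin n`, whose vertices are presented in the order `0, 1, …, n-1`.
Suppose `col : Fin n → ℕ` is the first-fit (greedy) coloring: each vertex `v`
receives the least color not used on its neighbors presented before `v`.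
Then `col` uses at most `⌊log₂ n⌋ + 1` colors, i.e. every color is `< Nat.log 2 n + 1`. -/
theorem firstFit_forest_log_colors (n : ℕ) (G : SimpleGraph (Fin n))
    (hforest : G.IsAcyclic) (col : Fin n → ℕ)
    (hgreedy : ∀ v : Fin n, col v = sInf {c : ℕ | ∀ u : Fin n, u < v → G.Adj u v → col u ≠ c}) :
    ∀ v : Fin n, col v < Nat.log 2 n + 1 := by
  intro v
  have hpow : 2 ^ col v ≤ n :=
    (hforest.two_pow_le_card_lowerComponent
      (fun _ _ hk ↦ SimpleGraph.exists_lt_adj_of_lt_sInf_firstFit hgreedy hk) v).trans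
      (card_le_univ _ |>.trans_eq (Fintype.card_fin n))
  exact Nat.lt_succ_of_le (Nat.le_log_of_pow_le one_lt_two hpow)
end

section
/- Let G be an overlap graph of a family of sets. If every clean induced subgraph H of G with ω(H) ≤ j satisfies χ(H) ≤ α_j for all 2 ≤ j ≤ ω(G), then χ(G) ≤ ∏_{j=2}^{ω(G)} 2α_j. -/
/-- Two sets *overlap* if they intersect but neither contains the other. -/
def SetsOverlap {α : Type*} (s t : Set α) : Prop :=
  (s ∩ t).Nonempty ∧ ¬ s ⊆ t ∧ ¬ t ⊆ s

/-- The restriction of the overlap model `μ` to `W` is *clean*: there are no three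
vertices `x, y, z` in `W` with `μ x` and `μ y` overlapping and `μ z ⊆ μ x ∩ μ y`. -/
def CleanOn {V α : Type*} (μ : V → Set α) (W : Set V) : Prop :=
  ¬ ∃ x ∈ W, ∃ y ∈ W, ∃ z ∈ W, SetsOverlap (μ x) (μ y) ∧ μ z ⊆ μ x ∩ μ y

/-!
Induct on the clique bound `k`. In an overlap graph without `(k+1)`-cliques, peel off layers:
each round removes every remaining vertex that is the last remaining vertex of some `k`-clique,
or, if there is none, the remaining vertices whose sets are inclusion-maximal. A vertex removed
early never has its set strictly inside the set of a vertex removed later. Hence a layer is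
clean (a bad triple would extend a `k`-clique to a `(k+1)`-clique), and every `k`-clique has two
vertices in the same or in consecutive layers. Colouring a vertex by the parity of its layer and
by an `α_k`-colouring of its layer thus leaves every colour class without `k`-cliques, and the
induction hypothesis colours each class.
-/

open Set SimpleGraph

section

variable {V α : Type*}

namespace SetsOverlap

variable {s t u : Set α}

theorem ssubset_left (h : SetsOverlap s t) (hu : u ⊆ s ∩ t) : u ⊂ s :=
  ⟨hu.trans inter_subset_left, fun hsu => h.2.1 (hsu.trans (hu.trans inter_subset_right))⟩

theorem ssubset_right (h : SetsOverlap s t) (hu : u ⊆ s ∩ t) : u ⊂ t :=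
  ⟨hu.trans inter_subset_right, fun htu => h.2.2 (htu.trans (hu.trans inter_subset_left))⟩

theorem of_ssubset (hst : SetsOverlap s t) (htu : t ⊂ u) (hsu : ¬ s ⊂ u) :
    SetsOverlap s u := by
  refine ⟨hst.1.mono (inter_subset_inter_right _ htu.subset), fun h => ?_,
    fun h => hst.2.2 (htu.subset.trans h)⟩
  rcases h.eq_or_ssubset with rfl | h
  · exact hst.2.2 htu.subset
  · exact hsu h

end SetsOverlap

theorem cleanOn_setOf_maximalFor (μ : V → Set α) (U : Set V) :
    CleanOn μ {v | MaximalFor (· ∈ U) μ v} := by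
  rintro ⟨x, hx, y, -, z, hz, hxy, hzxy⟩
  exact hxy.2.1
    ((hz.2 hx.1 (hzxy.trans inter_subset_left)).trans (hzxy.trans inter_subset_right))

theorem CleanOn.image {W : Type*} {μ : V → Set α} {f : W → V} {L : Set W}
    (h : CleanOn (μ ∘ f) L) : CleanOn μ (f '' L) := by
  rintro ⟨_, ⟨x, hx, rfl⟩, _, ⟨y, hy, rfl⟩, _, ⟨z, hz, rfl⟩, hxyz⟩
  exact h ⟨x, hx, y, hy, z, hz, hxyz⟩

namespace Peeling

variable (next : Set V → Set V)

def rest : ℕ → Set V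
  | 0 => univ
  | n + 1 => rest n \ next (rest n)

noncomputable def depth (v : V) : ℕ := sInf {n | v ∉ rest next (n + 1)}

variable {next}

theorem rest_antitone : Antitone (rest next) :=
  antitone_nat_of_succ_le fun _ => sdiff_subset

variable [Finite V]

theorem exists_notMem_rest (hsub : ∀ U, next U ⊆ U)
    (hne : ∀ U : Set V, U.Nonempty → (next U).Nonempty) (v : V) :
    ∃ n, v ∉ rest next (n + 1) := by
  by_contra! h
  have : StrictAnti (rest next) := strictAnti_nat_of_succ_lt fun n =>
    sdiff_lt (hsub _) (hne _ ⟨v, rest_antitone n.le_succ (h n)⟩).ne_empty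
  exact not_injective_infinite_finite _ this.injective

theorem mem_rest_iff (hsub : ∀ U, next U ⊆ U)
    (hne : ∀ U : Set V, U.Nonempty → (next U).Nonempty) {v : V} {n : ℕ} :
    v ∈ rest next n ↔ n ≤ depth next v := by
  refine ⟨fun hv => ?_, fun hle => ?_⟩
  · by_contra! hlt
    exact Nat.sInf_mem (exists_notMem_rest hsub hne v) (rest_antitone hlt hv)
  · cases n with
    | zero => trivial
    | succ m => exact not_not.1 (Nat.notMem_of_lt_sInf hle)

theorem depth_eq_iff (hsub : ∀ U, next U ⊆ U)
    (hne : ∀ U : Set V, U.Nonempty → (next U).Nonempty) {v : V} {n : ℕ} :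
    depth next v = n ↔ v ∈ next (rest next n) := by
  have h := fun {m : ℕ} => mem_rest_iff hsub hne (v := v) (n := m)
  refine ⟨?_, fun hv => ?_⟩
  · rintro rfl
    by_contra hv
    exact Nat.not_succ_le_self _ (h.1 ⟨h.2 le_rfl, hv⟩)
  · have hle : n ≤ depth next v := h.1 (hsub _ hv)
    have hlt : ¬ n + 1 ≤ depth next v := fun h' => (h.2 h').2 hv
    omega

end Peeling

namespace SimpleGraph

section Coloring

variable {G : SimpleGraph V}

theorem cliqueNum_lt_iff_cliqueFree [Finite V] {n : ℕ} : G.cliqueNum < n ↔ G.CliqueFree n := by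
  constructor
  · intro h s hs
    have := IsClique.card_le_cliqueNum (tc := hs.isClique)
    rw [hs.card_eq] at this
    omega
  · intro h
    by_contra! hle
    obtain ⟨s, hs⟩ := G.exists_isNClique_cliqueNum
    exact h.mono hle s hs

theorem colorable_induce_one_of_cliqueFreeOn_two {s : Set V} (h : G.CliqueFreeOn s 2) :
    (G.induce s).Colorable 1 :=
  colorable_one_iff.2 (cliqueFree_two.1 ((cliqueFree_induce_iff _ _ _).2 h))

noncomputable def induceInduceIso (s : Set V) (t : Set s) :
    (G.induce s).induce t ≃g G.induce (Subtype.val '' t) where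
  toEquiv := Equiv.Set.image Subtype.val t Subtype.val_injective
  map_rel_iff' := Iff.rfl

theorem CliqueFreeOn.image_val {s : Set V} {t : Set s} {n : ℕ}
    (h : (G.induce s).CliqueFreeOn t n) : G.CliqueFreeOn (Subtype.val '' t) n := by
  rw [← cliqueFree_induce_iff] at h ⊢
  exact h.comap (induceInduceIso s t).isContained'

theorem exists_fiberwise_coloring {ι : Type*} {n : ℕ} (f : V → ι)
    (h : ∀ i, (G.induce (f ⁻¹' {i})).Colorable n) :
    ∃ c : V → Fin n, ∀ ⦃u v⦄, G.Adj u v → f u = f v → c u ≠ c v := by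
  let C i := (h i).some
  have hC : ∀ v i (hv : f v = i), C i ⟨v, hv⟩ = C (f v) ⟨v, rfl⟩ := by
    rintro v _ rfl
    rfl
  refine ⟨fun v => C (f v) ⟨v, rfl⟩, fun u v huv hf => ?_⟩
  change C (f u) ⟨u, rfl⟩ ≠ C (f v) ⟨v, rfl⟩
  rw [← hC v (f u) hf.symm]
  exact (C (f u)).valid (show G.Adj u v from huv)

theorem colorable_card_mul_of_induce_fiber {ι : Type*} [Fintype ι] {n : ℕ} (f : V → ι)
    (h : ∀ i, (G.induce (f ⁻¹' {i})).Colorable n) : G.Colorable (Fintype.card ι * n) := by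
  obtain ⟨c, hc⟩ := exists_fiberwise_coloring f h
  let C : G.Coloring (ι × Fin n) := Coloring.mk (fun v => (f v, c v)) fun huv heq =>
    hc huv (congrArg Prod.fst heq) (congrArg Prod.snd heq)
  simpa using C.colorable

end Coloring

section Layering

variable (G : SimpleGraph V) (μ : V → Set α) (k : ℕ)

def cliqueTips (U : Set V) : Set V :=
  {v | ∃ t : Finset V, G.IsNClique k t ∧ (t : Set V) ∩ U = {v}}

/-- Where the paper removes a single remaining vertex of minimal index, we remove all remaining
vertices with a maximal set; such a layer is still clean (`cleanOn_setOf_maximalFor`). -/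
noncomputable def overlapLayer (U : Set V) : Set V :=
  open Classical in
  if (G.cliqueTips k U).Nonempty then G.cliqueTips k U else {v | MaximalFor (· ∈ U) μ v}

theorem overlapLayer_subset (U : Set V) : G.overlapLayer μ k U ⊆ U := by
  unfold overlapLayer
  split_ifs
  · rintro v ⟨t, -, htv⟩
    exact (htv.symm.subset rfl).2
  · exact fun v hv => hv.1

theorem overlapLayer_nonempty [Finite V] {U : Set V} (hU : U.Nonempty) :
    (G.overlapLayer μ k U).Nonempty := by
  unfold overlapLayer
  split_ifs with h
  · exact h
  · exact U.toFinite.exists_maximalFor μ U hU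

noncomputable def overlapDepth : V → ℕ := Peeling.depth (G.overlapLayer μ k)

variable {G μ k}

theorem adj_of_forall_not_ssubset [DecidableEq V]
    (hmodel : ∀ u v : V, G.Adj u v ↔ SetsOverlap (μ u) (μ v)) {t : Finset V} {z x : V}
    (ht : G.IsClique t) (hzt : z ∈ t) (hzx : μ z ⊂ μ x)
    (hx : ∀ w ∈ t, w ≠ z → ¬ μ w ⊂ μ x) :
    ∀ w ∈ t \ {z}, G.Adj x w := by
  intro w hw
  obtain ⟨hwt, hwz⟩ := Finset.mem_sdiff.1 hw
  have hwz : w ≠ z := by simpa using hwz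
  exact ((hmodel w x).2
    (((hmodel w z).1 (ht hwt hzt hwz)).of_ssubset hzx (hx w hwt hwz))).symm

variable [Finite V]

theorem mem_rest_overlapLayer_iff {v : V} {n : ℕ} :
    v ∈ Peeling.rest (G.overlapLayer μ k) n ↔ n ≤ G.overlapDepth μ k v :=
  Peeling.mem_rest_iff (G.overlapLayer_subset μ k) fun _ => G.overlapLayer_nonempty μ k

theorem overlapDepth_eq_iff {v : V} {n : ℕ} :
    G.overlapDepth μ k v = n ↔
      v ∈ G.overlapLayer μ k (Peeling.rest (G.overlapLayer μ k) n) :=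
  Peeling.depth_eq_iff (G.overlapLayer_subset μ k) fun _ => G.overlapLayer_nonempty μ k

theorem exists_isNClique_of_mem_cliqueTips {z : V} {e : ℕ}
    (hz : z ∈ G.cliqueTips k (Peeling.rest (G.overlapLayer μ k) e)) :
    ∃ t, G.IsNClique k t ∧ z ∈ t ∧ ∀ w ∈ t, w ≠ z → G.overlapDepth μ k w < e := by
  obtain ⟨t, ht, htz⟩ := hz
  obtain ⟨⟨hzt, -⟩, huniq⟩ := eq_singleton_iff_unique_mem.1 htz
  refine ⟨t, ht, hzt, fun w hwt hwz => ?_⟩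
  by_contra! hle
  exact hwz (huniq w ⟨hwt, mem_rest_overlapLayer_iff.2 hle⟩)

theorem overlapDepth_eq_of_isNClique {t : Finset V} {v : V} {e : ℕ} (ht : G.IsNClique k t)
    (hv : v ∈ t) (hle : e ≤ G.overlapDepth μ k v)
    (hlt : ∀ u ∈ t, u ≠ v → G.overlapDepth μ k u < e) : G.overlapDepth μ k v = e := by
  have htip : v ∈ G.cliqueTips k (Peeling.rest (G.overlapLayer μ k) e) := by
    refine ⟨t, ht, eq_singleton_iff_unique_mem.2
      ⟨⟨hv, mem_rest_overlapLayer_iff.2 hle⟩, ?_⟩⟩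
    rintro u ⟨hut, hu⟩
    by_contra huv
    exact (hlt u hut huv).not_ge (mem_rest_overlapLayer_iff.1 hu)
  rw [overlapDepth_eq_iff, overlapLayer, if_pos ⟨v, htip⟩]
  exact htip

/-- Otherwise `x` could replace `z` in the `k`-clique that made `z` a tip, and would have been
removed together with `z`. -/
theorem not_ssubset_of_overlapDepth_lt
    (hmodel : ∀ u v : V, G.Adj u v ↔ SetsOverlap (μ u) (μ v)) {z x : V}
    (h : G.overlapDepth μ k z < G.overlapDepth μ k x) : ¬ μ z ⊂ μ x := by
  classical
  induction hz : G.overlapDepth μ k z using Nat.strong_induction_on generalizing z x with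
  | _ e ih =>
  intro hzx
  have hzL := overlapDepth_eq_iff.1 hz
  unfold overlapLayer at hzL
  split_ifs at hzL
  · obtain ⟨t, ht, hzt, hlt⟩ := exists_isNClique_of_mem_cliqueTips hzL
    have hadj := adj_of_forall_not_ssubset hmodel ht.isClique hzt hzx fun w hwt hwz =>
      ih _ (hlt w hwt hwz) ((hlt w hwt hwz).trans (hz ▸ h)) rfl
    have hxe := overlapDepth_eq_of_isNClique (ht.insert_erase hadj hzt)
      (Finset.mem_insert_self x _) (hz ▸ h.le) fun u hu hux =>
        hlt u (Finset.mem_of_mem_erase ((Finset.mem_insert.1 hu).resolve_left hux))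
          (Finset.ne_of_mem_erase ((Finset.mem_insert.1 hu).resolve_left hux))
    omega
  · exact hzx.2 (hzL.2 (mem_rest_overlapLayer_iff.2 (by omega)) hzx.1)

theorem cleanOn_cliqueTips (hmodel : ∀ u v : V, G.Adj u v ↔ SetsOverlap (μ u) (μ v))
    (hG : G.CliqueFree (k + 1)) (e : ℕ) :
    CleanOn μ (G.cliqueTips k (Peeling.rest (G.overlapLayer μ k) e)) := by
  classical
  rintro ⟨x, hx, y, hy, z, hz, hxy, hzxy⟩
  obtain ⟨t, ht, hzt, hlt⟩ := exists_isNClique_of_mem_cliqueTips hz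
  have hdepth : ∀ v ∈ G.cliqueTips k (Peeling.rest (G.overlapLayer μ k) e),
      G.overlapDepth μ k v = e := fun v hv => by
    rw [overlapDepth_eq_iff, overlapLayer, if_pos ⟨v, hv⟩]
    exact hv
  have hadj : ∀ v ∈ G.cliqueTips k (Peeling.rest (G.overlapLayer μ k) e), μ z ⊂ μ v →
      ∀ w ∈ t \ {z}, G.Adj v w := fun v hv hzv =>
    adj_of_forall_not_ssubset hmodel ht.isClique hzt hzv fun w hwt hwz =>
      not_ssubset_of_overlapDepth_lt hmodel ((hlt w hwt hwz).trans_eq (hdepth v hv).symm)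
  have hyt := ht.insert_erase (hadj y hy (hxy.ssubset_right hzxy)) hzt
  refine hG (insert x (insert y (t.erase z))) (hyt.insert fun w hw => ?_)
  rcases Finset.mem_insert.1 hw with rfl | hw
  · exact (hmodel _ _).2 hxy
  · rw [← Finset.sdiff_singleton_eq_erase] at hw
    exact hadj x hx (hxy.ssubset_left hzxy) w hw

theorem cleanOn_overlapDepth_fiber (hmodel : ∀ u v : V, G.Adj u v ↔ SetsOverlap (μ u) (μ v))
    (hG : G.CliqueFree (k + 1)) (e : ℕ) : CleanOn μ (G.overlapDepth μ k ⁻¹' {e}) := by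
  have : G.overlapDepth μ k ⁻¹' {e} =
      G.overlapLayer μ k (Peeling.rest (G.overlapLayer μ k) e) :=
    Set.ext fun _ => overlapDepth_eq_iff
  rw [this, overlapLayer]
  split_ifs
  · exact cleanOn_cliqueTips hmodel hG e
  · exact cleanOn_setOf_maximalFor μ _

/-- If all other vertices of `t` were removed two or more rounds before the last one, `v`, then
`v` would have been removed one round earlier, as the last remaining vertex of `t`. -/
theorem IsNClique.exists_overlapDepth_le_succ (hk : 2 ≤ k) {t : Finset V}
    (ht : G.IsNClique k t) : ∃ u ∈ t, ∃ v ∈ t, u ≠ v ∧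
      G.overlapDepth μ k u ≤ G.overlapDepth μ k v ∧
      G.overlapDepth μ k v ≤ G.overlapDepth μ k u + 1 := by
  have hcard : 1 < t.card := by rw [ht.card_eq]; omega
  obtain ⟨v, hvt, hvmax⟩ := t.exists_max_image (G.overlapDepth μ k)
    (Finset.card_pos.1 (by omega))
  by_contra! hfar
  have hlt : ∀ u ∈ t, u ≠ v → G.overlapDepth μ k u < G.overlapDepth μ k v - 1 :=
    fun u hu huv => by have := hfar u hu v hvt huv (hvmax u hu); omega
  obtain ⟨u, hu, huv⟩ := Finset.exists_mem_ne hcard v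
  have := overlapDepth_eq_of_isNClique ht hvt (Nat.sub_le _ 1) hlt
  have := hlt u hu huv
  omega

/-- Colour `v` by the parity of its layer and its colour within the layer; a colour class has no
`k`-clique, since a `k`-clique has two vertices in the same or in consecutive layers. -/
theorem colorable_two_mul_mul_of_cliqueFree
    (hmodel : ∀ u v : V, G.Adj u v ↔ SetsOverlap (μ u) (μ v))
    (hk : 2 ≤ k) (hG : G.CliqueFree (k + 1)) {B C : ℕ}
    (hB : ∀ L, CleanOn μ L → (G.induce L).Colorable B)
    (hC : ∀ U, G.CliqueFreeOn U k → (G.induce U).Colorable C) :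
    G.Colorable (2 * B * C) := by
  obtain ⟨c, hc⟩ := exists_fiberwise_coloring (G.overlapDepth μ k) fun e =>
    hB _ (cleanOn_overlapDepth_fiber hmodel hG e)
  let key : V → ZMod 2 × Fin B := fun v => (G.overlapDepth μ k v, c v)
  have hkey : ∀ p, G.CliqueFreeOn (key ⁻¹' {p}) k := by
    intro p t htp ht
    obtain ⟨u, hu, v, hv, huv, hle, hle'⟩ := ht.exists_overlapDepth_le_succ (μ := μ) hk
    have hkuv : key u = key v := (htp hu).trans (htp hv).symm
    rcases hle.eq_or_lt with hdv | hdv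
    · exact hc (ht.isClique hu hv huv) hdv (congrArg Prod.snd hkuv)
    · have hpar : (G.overlapDepth μ k u : ZMod 2) = (G.overlapDepth μ k u + 1 : ℕ) := by
        rw [show G.overlapDepth μ k u + 1 = G.overlapDepth μ k v by omega]
        exact congrArg Prod.fst hkuv
      simp at hpar
  simpa using colorable_card_mul_of_induce_fiber key fun p => hC _ (hkey p)

theorem colorable_induce_prod_of_cliqueFreeOn
    (hmodel : ∀ u v : V, G.Adj u v ↔ SetsOverlap (μ u) (μ v)) (A : ℕ → ℕ) (k : ℕ)
    (hclean : ∀ j, 2 ≤ j → j ≤ k → ∀ L : Set V, CleanOn μ L →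
      G.CliqueFreeOn L (j + 1) → (G.induce L).Colorable (A j))
    (W : Set V) (hW : G.CliqueFreeOn W (k + 1)) :
    (G.induce W).Colorable (∏ j ∈ Finset.Icc 2 k, 2 * A j) := by
  induction k using Nat.strong_induction_on generalizing W with
  | _ k ih =>
  rcases lt_or_ge k 2 with hk | hk
  · rw [Finset.Icc_eq_empty (by omega), Finset.prod_empty]
    exact colorable_induce_one_of_cliqueFreeOn_two (CliqueFreeOn.mono _ (by omega) hW)
  obtain ⟨m, rfl⟩ : ∃ m, k = m + 1 := ⟨k - 1, by omega⟩
  rw [Finset.prod_Icc_succ_top (by omega), mul_comm]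
  refine colorable_two_mul_mul_of_cliqueFree (G := G.induce W) (μ := μ ∘ (↑))
    (fun u v => hmodel u v) hk ((cliqueFree_induce_iff _ _ _).2 hW) (fun L hL => ?_)
    (fun U hU => ?_)
  · have hLW := CliqueFreeOn.subset _ (Subtype.coe_image_subset W L) hW
    exact (hclean (m + 1) hk le_rfl _ hL.image hLW).of_hom (induceInduceIso W L).toHom
  · exact (ih m (by omega) (fun j hj hjm => hclean j hj (by omega)) _ hU.image_val).of_hom
      (induceInduceIso W U).toHom

end Layering

end SimpleGraph

end

/-- **Reduction to clean overlap graphs.**  Let `G` be the overlap graph of a finite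
family of sets `μ`.  If for every `j` with `2 ≤ j ≤ ω(G)` every clean induced subgraph
`H` of `G` with `ω(H) ≤ j` satisfies `χ(H) ≤ A j`, then
`χ(G) ≤ ∏_{j=2}^{ω(G)} 2 · A j`. -/
theorem overlap_reduction_to_clean {V α : Type*} [Fintype V]
    (G : SimpleGraph V) (μ : V → Set α)
    (hmodel : ∀ u v : V, G.Adj u v ↔ SetsOverlap (μ u) (μ v))
    (A : ℕ → ℕ)
    (hclean : ∀ j, 2 ≤ j → j ≤ G.cliqueNum → ∀ W : Set V, CleanOn μ W →
      (G.induce W).cliqueNum ≤ j → (G.induce W).Colorable (A j)) :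
    G.Colorable (∏ j ∈ Finset.Icc 2 G.cliqueNum, 2 * A j) := by
  have hω : G.CliqueFree (G.cliqueNum + 1) := cliqueNum_lt_iff_cliqueFree.1 (Nat.lt_succ_self _)
  have hcleanOn : ∀ j, 2 ≤ j → j ≤ G.cliqueNum → ∀ L : Set V, CleanOn μ L →
      G.CliqueFreeOn L (j + 1) → (G.induce L).Colorable (A j) :=
    fun j hj hjω L hL hLfree => hclean j hj hjω L hL <| Nat.lt_succ_iff.1 <|
      cliqueNum_lt_iff_cliqueFree.2 ((cliqueFree_induce_iff _ _ _).2 hLfree)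
  exact (colorable_induce_prod_of_cliqueFreeOn hmodel A G.cliqueNum hcleanOn univ
    ((cliqueFreeOn_univ G).2 hω)).of_hom G.induceUnivIso.symm.toHom
end

section
/- Let L_0, L_1, … be the sets computed by the k-clique breadth-first search on a graph G. Then every k-clique of G has two of its vertices in one set L_d, or in two consecutive sets L_d and L_{d+1}. -/
/-- `L` and `V'` describe a run of the *`k`-clique breadth-first search* on a graph `G`
with vertices `v_0 < v_1 < ⋯` (in the order of `Fin n`): `V' d` is the set of remaining
vertices before step `d`, and `L d` is the set extracted at step `d`. -/
def KCliqueBFS {n : ℕ} (G : SimpleGraph (Fin n)) (k : ℕ)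
    (L V' : ℕ → Finset (Fin n)) : Prop :=
  V' 0 = Finset.univ ∧
  (∀ d, V' (d + 1) = V' d \ L d) ∧
  -- if some `k`-clique has exactly one remaining vertex, extract all such vertices:
  (∀ d, (∃ K : Finset (Fin n), G.IsNClique k K ∧ (K ∩ V' d).card = 1) →
    ∀ v : Fin n, v ∈ L d ↔ v ∈ V' d ∧ ∃ K : Finset (Fin n), G.IsNClique k K ∧ K ∩ V' d = {v}) ∧
  -- otherwise extract the remaining vertex of minimum index:
  (∀ d, (V' d).Nonempty → (¬ ∃ K : Finset (Fin n), G.IsNClique k K ∧ (K ∩ V' d).card = 1) →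
    ∃ v ∈ V' d, (∀ u ∈ V' d, v ≤ u) ∧ L d = {v}) ∧
  (∀ d, V' d = ∅ → L d = ∅)

/-- **Lemma (k-clique BFS levels split cliques).**  Let `L 0, L 1, …` be the sets computed
by the `k`-clique breadth-first search on a graph `G`.  Then every `k`-clique of `G` has
two of its vertices in one set `L d`, or in two consecutive sets `L d` and `L (d+1)`. -/
theorem kclique_bfs_two_vertices {n k : ℕ} (hk : 2 ≤ k) (G : SimpleGraph (Fin n))
    (L V' : ℕ → Finset (Fin n)) (hbfs : KCliqueBFS G k L V')
    (K : Finset (Fin n)) (hK : G.IsNClique k K) :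
    ∃ d : ℕ, ∃ x ∈ K, ∃ y ∈ K, x ≠ y ∧
      ((x ∈ L d ∧ y ∈ L d) ∨ (x ∈ L d ∧ y ∈ L (d + 1))) := by
  obtain ⟨h0, hstep, hclique, hmin, _hemp⟩ := hbfs
  -- while the clique has ≥ 2 remaining vertices, V' strictly shrinks
  have hshrink : ∀ d, 1 < (K ∩ V' d).card → (V' (d + 1)).card < (V' d).card := by
    intro d hd
    have hne : (V' d).Nonempty := by
      have hp : 0 < (K ∩ V' d).card := by omega
      obtain ⟨v, hv⟩ := Finset.card_pos.mp hp
      exact ⟨v, (Finset.mem_inter.mp hv).2⟩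
    have : ∃ v ∈ V' d, v ∈ L d := by
      by_cases hc : ∃ K' : Finset (Fin n), G.IsNClique k K' ∧ (K' ∩ V' d).card = 1
      · obtain ⟨K', hK', hc1⟩ := hc
        obtain ⟨v, hv⟩ := Finset.card_eq_one.mp hc1
        have hvV : v ∈ V' d := by
          have : v ∈ K' ∩ V' d := hv ▸ Finset.mem_singleton_self v
          exact (Finset.mem_inter.mp this).2
        exact ⟨v, hvV, (hclique d ⟨K', hK', hc1⟩ v).mpr ⟨hvV, K', hK', hv⟩⟩
      · obtain ⟨v, hvV, _, hLd⟩ := hmin d hne hc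
        exact ⟨v, hvV, hLd ▸ Finset.mem_singleton_self v⟩
    obtain ⟨v, hvV, hvL⟩ := this
    apply Finset.card_lt_card
    rw [hstep d]
    exact Finset.ssubset_iff_of_subset Finset.sdiff_subset |>.mpr
      ⟨v, hvV, fun h => (Finset.mem_sdiff.mp h).2 hvL⟩
  -- there is some step where only ≤ 1 clique vertex remains
  have hex : ∃ d, (K ∩ V' d).card ≤ 1 := by
    by_contra h
    push_neg at h
    have hbd : ∀ d, (V' d).card + d ≤ (V' 0).card := by
      intro d
      induction d with
      | zero => simp
      | succ d ih => have := hshrink d (h d); omega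
    have := hbd ((V' 0).card + 1)
    omega
  have h0card : ¬ (K ∩ V' 0).card ≤ 1 := by
    rw [h0, Finset.inter_univ, hK.2]; omega
  obtain ⟨e, he1, he0⟩ : ∃ e, (K ∩ V' (e + 1)).card ≤ 1 ∧ 1 < (K ∩ V' e).card := by
    classical
    let d0 := Nat.find hex
    have hd0 : (K ∩ V' d0).card ≤ 1 := Nat.find_spec hex
    have hpos : d0 ≠ 0 := fun h => h0card (h ▸ hd0)
    obtain ⟨e, he⟩ := Nat.exists_eq_succ_of_ne_zero hpos
    refine ⟨e, by rw [← Nat.succ_eq_add_one, ← he]; exact hd0, ?_⟩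
    have := Nat.find_min hex (m := e) (by omega)
    omega
  have hsub : V' (e + 1) ⊆ V' e := by rw [hstep e]; exact Finset.sdiff_subset
  have hLmem : ∀ x, x ∈ V' e → x ∉ V' (e + 1) → x ∈ L e := by
    intro x hx hx'
    by_contra hxL
    exact hx' (by rw [hstep e]; exact Finset.mem_sdiff.mpr ⟨hx, hxL⟩)
  interval_cases hc : (K ∩ V' (e + 1)).card
  · -- all remaining clique vertices died at step e: two of them in L e
    have hemp : K ∩ V' (e + 1) = ∅ := Finset.card_eq_zero.mp hc
    obtain ⟨x, hx, y, hy, hxy⟩ := Finset.one_lt_card.mp he0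
    obtain ⟨hxK, hxV⟩ := Finset.mem_inter.mp hx
    obtain ⟨hyK, hyV⟩ := Finset.mem_inter.mp hy
    have hx' : x ∉ V' (e + 1) := fun h =>
      (Finset.notMem_empty x) (hemp ▸ Finset.mem_inter.mpr ⟨hxK, h⟩)
    have hy' : y ∉ V' (e + 1) := fun h =>
      (Finset.notMem_empty y) (hemp ▸ Finset.mem_inter.mpr ⟨hyK, h⟩)
    exact ⟨e, x, hxK, y, hyK, hxy, Or.inl ⟨hLmem x hxV hx', hLmem y hyV hy'⟩⟩
  · -- exactly one clique vertex y remains: it goes to L (e+1); some other x went to L e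
    obtain ⟨y, hy⟩ := Finset.card_eq_one.mp hc
    have hyi : y ∈ K ∩ V' (e + 1) := hy ▸ Finset.mem_singleton_self y
    obtain ⟨hyK, hyV1⟩ := Finset.mem_inter.mp hyi
    have hyL : y ∈ L (e + 1) :=
      (hclique (e + 1) ⟨K, hK, hc⟩ y).mpr ⟨hyV1, K, hK, hy⟩
    -- get another vertex x ∈ K ∩ V' e, x ≠ y
    have hyVe : y ∈ K ∩ V' e := Finset.mem_inter.mpr ⟨hyK, hsub hyV1⟩
    obtain ⟨x, hx, hxy⟩ : ∃ x ∈ K ∩ V' e, x ≠ y := by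
      obtain ⟨a, ha, b, hb, hab⟩ := Finset.one_lt_card.mp he0
      by_cases hay : a = y
      · exact ⟨b, hb, fun h => hab (h ▸ hay ▸ rfl)⟩
      · exact ⟨a, ha, hay⟩
    obtain ⟨hxK, hxV⟩ := Finset.mem_inter.mp hx
    have hx1 : x ∉ V' (e + 1) := fun h => hxy (Finset.mem_singleton.mp
      (hy ▸ Finset.mem_inter.mpr ⟨hxK, h⟩))
    exact ⟨e, x, hxK, y, hyK, hxy, Or.inr ⟨hLmem x hxV hx1, hyL⟩⟩
end

section
/- Let G be an overlap graph with overlap model μ and with vertices v_1,…,v_n ordered so that μ(v_i) ⊄ μ(v_j) whenever i < j, and suppose ω(G) ≤ k. Then every set L_d computed by the k-clique breadth-first search on G induces a clean subgraph of G: there are no v_i, v_j, v_r ∈ L_d such that μ(v_i) overlaps μ(v_j) and μ(v_r) ⊆ μ(v_i) ∩ μ(v_j). -/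
/-- Remaining vertex sets are decreasing along the run. -/
lemma kbfs_mono {n k : ℕ} {G : SimpleGraph (Fin n)} {L V' : ℕ → Finset (Fin n)}
    (hbfs : KCliqueBFS G k L V') : ∀ d e, d ≤ e → V' e ⊆ V' d := by
  intro d e h
  induction e with
  | zero => cases Nat.le_zero.mp h; exact fun a ha => ha
  | succ e ih =>
    rcases Nat.lt_or_ge d (e + 1) with h' | h'
    · have : V' (e + 1) ⊆ V' e := by
        rw [hbfs.2.1 e]; exact Finset.sdiff_subset
      exact this.trans (ih (Nat.lt_succ_iff.mp h'))
    · have : d = e + 1 := le_antisymm h h'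
      subst this; exact fun a ha => ha

/-- Every vertex missing from `V' d` was extracted at an earlier level. -/
lemma kbfs_removed {n k : ℕ} {G : SimpleGraph (Fin n)} {L V' : ℕ → Finset (Fin n)}
    (hbfs : KCliqueBFS G k L V') : ∀ d v, v ∉ V' d → ∃ e, e < d ∧ v ∈ L e := by
  intro d
  induction d with
  | zero => intro v hv; exact absurd (hbfs.1 ▸ Finset.mem_univ v) hv
  | succ d ih =>
    intro v hv
    by_cases hvd : v ∈ V' d
    · refine ⟨d, Nat.lt_succ_self d, ?_⟩
      by_contra hL
      exact hv (by rw [hbfs.2.1 d]; exact Finset.mem_sdiff.mpr ⟨hvd, hL⟩)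
    · obtain ⟨e, he, hL⟩ := ih v hvd
      exact ⟨e, he.trans (Nat.lt_succ_self d), hL⟩

/-- **Key claim.**  If `u` is extracted at level `d` while `i` survives level `d`, and
`μ u ⊆ μ i`, then in fact `μ u = μ i`. -/
lemma kbfs_key {n k : ℕ} {α : Type*} {G : SimpleGraph (Fin n)} {μ : Fin n → Set α}
    (hmodel : ∀ u v : Fin n, G.Adj u v ↔ SetsOverlap (μ u) (μ v))
    (horder : ∀ i j : Fin n, i < j → ¬ μ i ⊂ μ j)
    {L V' : ℕ → Finset (Fin n)} (hbfs : KCliqueBFS G k L V') :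
    ∀ d, ∀ u ∈ L d, ∀ i ∈ V' d, i ∉ L d → μ u ⊆ μ i → μ u = μ i := by
  intro d
  induction d using Nat.strong_induction_on with
  | _ d IH =>
    intro u hu i hiV hiL hsub
    by_cases hcl : ∃ K : Finset (Fin n), G.IsNClique k K ∧ (K ∩ V' d).card = 1
    · -- BFS case: there is a clique meeting `V' d` in exactly one vertex.
      have hiff := hbfs.2.2.1 d hcl
      obtain ⟨huV, K, hK, hKV⟩ := (hiff u).mp hu
      by_contra hne
      have hui : u ≠ i := fun h => hiL (h ▸ hu)
      have huK : u ∈ K := by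
        have : u ∈ K ∩ V' d := hKV ▸ Finset.mem_singleton_self u
        exact (Finset.mem_inter.mp this).1
      have hiK : i ∉ K := by
        intro h
        have : i ∈ K ∩ V' d := Finset.mem_inter.mpr ⟨h, hiV⟩
        exact hui ((Finset.mem_singleton.mp (hKV ▸ this)).symm)
      -- every other vertex of `K` is adjacent to `i`
      have hadj : ∀ w ∈ K.erase u, G.Adj i w := by
        intro w hw
        obtain ⟨hwne, hwK⟩ := Finset.mem_erase.mp hw
        have hadjwu : G.Adj w u := hK.1 hwK huK hwne
        obtain ⟨hint, hwu, huw⟩ := (hmodel w u).mp hadjwu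
        have hwV : w ∉ V' d := by
          intro h
          have : w ∈ K ∩ V' d := Finset.mem_inter.mpr ⟨hwK, h⟩
          exact hwne (Finset.mem_singleton.mp (hKV ▸ this))
        refine (hmodel i w).mpr ⟨?_, ?_, ?_⟩
        · obtain ⟨x, hx⟩ := hint
          exact ⟨x, hsub hx.2, hx.1⟩
        · intro h; exact huw (hsub.trans h)
        · intro h
          obtain ⟨e, he, hwe⟩ := kbfs_removed hbfs d w hwV
          have hiVe : i ∈ V' e := kbfs_mono hbfs e d he.le hiV
          have hiLe : i ∉ L e := by
            intro hL
            have : i ∈ V' (e + 1) := kbfs_mono hbfs (e + 1) d he hiV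
            rw [hbfs.2.1 e] at this
            exact (Finset.mem_sdiff.mp this).2 hL
          have : μ w = μ i := IH e he w hwe i hiVe hiLe h
          exact huw (this ▸ hsub)
      -- `insert i (K.erase u)` is a `k`-clique meeting `V' d` exactly in `i`
      have hclique : G.IsClique (insert i (K.erase u) : Finset (Fin n)) := by
        rw [Finset.coe_insert]
        refine (hK.1.subset ?_).insert ?_
        · exact_mod_cast Finset.erase_subset u K
        · intro b hb _
          exact hadj b (by exact_mod_cast hb)
      have hcard : (insert i (K.erase u)).card = k := by
        have hiE : i ∉ K.erase u := fun h => hiK (Finset.mem_of_mem_erase h)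
        rw [Finset.card_insert_of_notMem hiE, Finset.card_erase_of_mem huK, hK.2]
        have : 1 ≤ k := hK.2 ▸ Finset.card_pos.mpr ⟨u, huK⟩
        omega
      have hinter : (insert i (K.erase u)) ∩ V' d = {i} := by
        ext a
        simp only [Finset.mem_inter, Finset.mem_insert, Finset.mem_erase,
          Finset.mem_singleton]
        constructor
        · rintro ⟨(rfl | ⟨hau, haK⟩), haV⟩
          · rfl
          · exact absurd (Finset.mem_singleton.mp
              (hKV ▸ Finset.mem_inter.mpr ⟨haK, haV⟩)) hau
        · rintro rfl; exact ⟨Or.inl rfl, hiV⟩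
      exact hiL ((hiff i).mpr ⟨hiV, insert i (K.erase u), ⟨hclique, hcard⟩, hinter⟩)
    · -- minimum-index case
      obtain ⟨v, hvV, hvmin, hLd⟩ := hbfs.2.2.2.1 d ⟨i, hiV⟩ hcl
      have huv : u = v := Finset.mem_singleton.mp (hLd ▸ hu)
      subst huv
      have hne : u ≠ i := fun h => hiL (h ▸ hu)
      have hlt : u < i := lt_of_le_of_ne (hvmin i hiV) hne
      by_contra h
      exact horder u i hlt (hsub.ssubset_of_ne h)

/-- **Lemma (k-clique BFS levels are clean).**  Let `G` be an overlap graph with overlap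
model `μ`, with vertices `v_0, …, v_{n-1}` ordered so that `μ v_i ⊄ μ v_j` whenever
`i < j`, and with `ω(G) ≤ k`.  Then every set `L d` computed by the `k`-clique
breadth-first search on `G` induces a clean subgraph of `G`: there are no
`v_i, v_j, v_r ∈ L d` with `μ v_i` overlapping `μ v_j` and `μ v_r ⊆ μ v_i ∩ μ v_j`. -/
theorem kclique_bfs_levels_clean {n k : ℕ} {α : Type*} (G : SimpleGraph (Fin n))
    (μ : Fin n → Set α)
    (hmodel : ∀ u v : Fin n, G.Adj u v ↔ SetsOverlap (μ u) (μ v))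
    (horder : ∀ i j : Fin n, i < j → ¬ μ i ⊂ μ j)
    (homega : G.cliqueNum ≤ k)
    (L V' : ℕ → Finset (Fin n)) (hbfs : KCliqueBFS G k L V') (d : ℕ) :
    ¬ ∃ i ∈ L d, ∃ j ∈ L d, ∃ r ∈ L d,
        SetsOverlap (μ i) (μ j) ∧ μ r ⊆ μ i ∩ μ j := by
  rintro ⟨i, hi, j, hj, r, hr, hov, hsub⟩
  obtain ⟨hint, hij, hji⟩ := hov
  have hsubi : μ r ⊆ μ i := hsub.trans Set.inter_subset_left
  have hsubj : μ r ⊆ μ j := hsub.trans Set.inter_subset_right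
  have hij' : i ≠ j := fun h => hij (h ▸ subset_refl _)
  -- level `d` must be a BFS level
  have hcl : ∃ K : Finset (Fin n), G.IsNClique k K ∧ (K ∩ V' d).card = 1 := by
    by_contra hcl
    by_cases hVd : V' d = ∅
    · exact absurd (hbfs.2.2.2.2 d hVd ▸ hi) (Finset.notMem_empty i)
    · obtain ⟨v, _, _, hLd⟩ :=
        hbfs.2.2.2.1 d (Finset.nonempty_iff_ne_empty.mpr hVd) hcl
      exact hij' ((Finset.mem_singleton.mp (hLd ▸ hi)).trans
        (Finset.mem_singleton.mp (hLd ▸ hj)).symm)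
  have hiff := hbfs.2.2.1 d hcl
  obtain ⟨hrV, K, hK, hKV⟩ := (hiff r).mp hr
  have hiV : i ∈ V' d := ((hiff i).mp hi).1
  have hjV : j ∈ V' d := ((hiff j).mp hj).1
  have hri : r ≠ i := fun h => hij (h ▸ hsubj)
  have hrj : r ≠ j := fun h => hji (h ▸ hsubi)
  have hrK : r ∈ K := by
    have : r ∈ K ∩ V' d := hKV ▸ Finset.mem_singleton_self r
    exact (Finset.mem_inter.mp this).1
  have hiK : i ∉ K := by
    intro h
    exact hri (Finset.mem_singleton.mp
      (hKV ▸ Finset.mem_inter.mpr ⟨h, hiV⟩)).symm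
  have hjK : j ∉ K := by
    intro h
    exact hrj (Finset.mem_singleton.mp
      (hKV ▸ Finset.mem_inter.mpr ⟨h, hjV⟩)).symm
  -- every other vertex of `K` is adjacent to both `i` and `j`
  have hadj : ∀ a : Fin n, a ∈ V' d → a ∉ L d → μ r ⊆ μ a →
      ∀ w ∈ K.erase r, G.Adj a w := by
    intro a haV haL hsuba w hw
    obtain ⟨hwne, hwK⟩ := Finset.mem_erase.mp hw
    have hadjwr : G.Adj w r := hK.1 hwK hrK hwne
    obtain ⟨hintw, hwr, hrw⟩ := (hmodel w r).mp hadjwr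
    have hwV : w ∉ V' d := by
      intro h
      exact hwne (Finset.mem_singleton.mp
        (hKV ▸ Finset.mem_inter.mpr ⟨hwK, h⟩))
    refine (hmodel a w).mpr ⟨?_, ?_, ?_⟩
    · obtain ⟨x, hx⟩ := hintw
      exact ⟨x, hsuba hx.2, hx.1⟩
    · intro h; exact hrw (hsuba.trans h)
    · intro h
      obtain ⟨e, he, hwe⟩ := kbfs_removed hbfs d w hwV
      have haVe : a ∈ V' e := kbfs_mono hbfs e d he.le haV
      have haLe : a ∉ L e := by
        intro hL
        have : a ∈ V' (e + 1) := kbfs_mono hbfs (e + 1) d he haV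
        rw [hbfs.2.1 e] at this
        exact (Finset.mem_sdiff.mp this).2 hL
      have : μ w = μ a := kbfs_key hmodel horder hbfs e w hwe a haVe haLe h
      exact hrw (this ▸ hsuba)
  have hadji : ∀ w ∈ K.erase r, G.Adj i w := by
    intro w hw
    obtain ⟨hwne, hwK⟩ := Finset.mem_erase.mp hw
    have hadjwr : G.Adj w r := hK.1 hwK hrK hwne
    obtain ⟨hintw, hwr, hrw⟩ := (hmodel w r).mp hadjwr
    have hwV : w ∉ V' d := by
      intro h
      exact hwne (Finset.mem_singleton.mp
        (hKV ▸ Finset.mem_inter.mpr ⟨hwK, h⟩))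
    refine (hmodel i w).mpr ⟨?_, ?_, ?_⟩
    · obtain ⟨x, hx⟩ := hintw
      exact ⟨x, hsubi hx.2, hx.1⟩
    · intro h; exact hrw (hsubi.trans h)
    · intro h
      obtain ⟨e, he, hwe⟩ := kbfs_removed hbfs d w hwV
      have hiVe : i ∈ V' e := kbfs_mono hbfs e d he.le hiV
      have hiLe : i ∉ L e := by
        intro hL
        have : i ∈ V' (e + 1) := kbfs_mono hbfs (e + 1) d he hiV
        rw [hbfs.2.1 e] at this
        exact (Finset.mem_sdiff.mp this).2 hL
      have : μ w = μ i := kbfs_key hmodel horder hbfs e w hwe i hiVe hiLe h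
      exact hrw (this ▸ hsubi)
  have hadjj : ∀ w ∈ K.erase r, G.Adj j w := by
    intro w hw
    obtain ⟨hwne, hwK⟩ := Finset.mem_erase.mp hw
    have hadjwr : G.Adj w r := hK.1 hwK hrK hwne
    obtain ⟨hintw, hwr, hrw⟩ := (hmodel w r).mp hadjwr
    have hwV : w ∉ V' d := by
      intro h
      exact hwne (Finset.mem_singleton.mp
        (hKV ▸ Finset.mem_inter.mpr ⟨hwK, h⟩))
    refine (hmodel j w).mpr ⟨?_, ?_, ?_⟩
    · obtain ⟨x, hx⟩ := hintw
      exact ⟨x, hsubj hx.2, hx.1⟩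
    · intro h; exact hrw (hsubj.trans h)
    · intro h
      obtain ⟨e, he, hwe⟩ := kbfs_removed hbfs d w hwV
      have hjVe : j ∈ V' e := kbfs_mono hbfs e d he.le hjV
      have hjLe : j ∉ L e := by
        intro hL
        have : j ∈ V' (e + 1) := kbfs_mono hbfs (e + 1) d he hjV
        rw [hbfs.2.1 e] at this
        exact (Finset.mem_sdiff.mp this).2 hL
      have : μ w = μ j := kbfs_key hmodel horder hbfs e w hwe j hjVe hjLe h
      exact hrw (this ▸ hsubj)
  -- `insert i (insert j (K.erase r))` is a clique of size `k + 1`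
  have hclique : G.IsClique (insert i (insert j (K.erase r)) : Finset (Fin n)) := by
    rw [Finset.coe_insert, Finset.coe_insert]
    refine (((hK.1.subset ?_).insert ?_).insert ?_)
    · exact_mod_cast Finset.erase_subset r K
    · intro b hb _
      exact hadjj b (by exact_mod_cast hb)
    · intro b hb hbne
      rcases hb with rfl | hb
      · exact (hmodel i b).mpr ⟨hint, hij, hji⟩
      · exact hadji b (by exact_mod_cast hb)
  have hjE : j ∉ K.erase r := fun h => hjK (Finset.mem_of_mem_erase h)
  have hiE : i ∉ insert j (K.erase r) := by
    simp only [Finset.mem_insert]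
    rintro (rfl | h)
    · exact hij' rfl
    · exact hiK (Finset.mem_of_mem_erase h)
  have hk1 : 1 ≤ k := hK.2 ▸ Finset.card_pos.mpr ⟨r, hrK⟩
  have hcard : (insert i (insert j (K.erase r))).card = k + 1 := by
    rw [Finset.card_insert_of_notMem hiE, Finset.card_insert_of_notMem hjE,
      Finset.card_erase_of_mem hrK, hK.2]
    omega
  have := hclique.card_le_cliqueNum
  rw [hcard] at this
  omega
end

section
/- Let V be a finite set with a strict partial order ≺ partitioned into three relations ⊑ (includes), ≬ (overlaps), ∥ (parallel) satisfying: (A1) x ⊑ y and y ⊑ z imply x ⊑ z; (A2) x ⊑ y and y ≬ z imply x ⊑ z or x ≬ z; (A3) x ≬ y and y ⊑ z imply x ≬ z or x ∥ z; (A4) x ∥ y and y ≺ z imply x ∥ z. Then there exists a tree T and a family of subtrees (S_x)_{x ∈ V} of T such that for all x ≺ y: S_y ⊊ S_x iff x ⊑ y; S_x and S_y overlap (intersect, neither contained in the other) iff x ≬ y; and S_x ∩ S_y = ∅ iff x ∥ y. Moreover the resulting subtree family is a clean overlap model (no two overlapping subtrees both contain a third one). -/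
theorem SetsOverlap.symm {α : Type*} {s t : Set α} (h : SetsOverlap s t) : SetsOverlap t s :=
  ⟨Set.inter_comm s t ▸ h.1, h.2.2, h.2.1⟩

open SimpleGraph

section ParentGraph

variable {T : Type*} (p : T → T)

def parentGraph : SimpleGraph T := SimpleGraph.fromRel fun a b => p a = b

theorem parentGraph_adj {a b : T} : (parentGraph p).Adj a b ↔ a ≠ b ∧ (p a = b ∨ p b = a) :=
  fromRel_adj _ a b

variable {p} {d : T → ℕ}

theorem parentGraph_induce_connected {s : Set T} {c : T} (hc : c ∈ s)
    (hp : ∀ a ∈ s, a ≠ c → p a ∈ s ∧ d (p a) < d a) :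
    ((parentGraph p).induce s).Connected := by
  have reach : ∀ a (ha : a ∈ s), ((parentGraph p).induce s).Reachable ⟨c, hc⟩ ⟨a, ha⟩ := by
    intro a
    induction a using (measure d).wf.induction with
    | h a ih =>
      intro ha
      by_cases hac : a = c
      · subst hac; rfl
      obtain ⟨hpa, hlt⟩ := hp a ha hac
      have hadj : ((parentGraph p).induce s).Adj ⟨p a, hpa⟩ ⟨a, ha⟩ :=
        ⟨fun h => hlt.ne (congrArg d h), Or.inr rfl⟩
      exact (ih _ hlt hpa).trans hadj.reachable
  exact (connected_iff_exists_forall_reachable _).2 ⟨⟨c, hc⟩, fun ⟨a, ha⟩ => reach a ha⟩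

/-- The edges `s(a, p a)` for `a ≠ r` are pairwise distinct and exhaust the graph, so it is a
connected graph with `|T| - 1` edges. -/
theorem parentGraph_isTree [Finite T] {r : T} (hr : p r = r)
    (hd : ∀ a, a ≠ r → d (p a) < d a) : (parentGraph p).IsTree := by
  have hne : ∀ a, a ≠ r → a ≠ p a := fun a ha h => (hd a ha).ne (congrArg d h.symm)
  let edge : {a // a ≠ r} → (parentGraph p).edgeSet := fun a =>
    ⟨s(a.1, p a.1), (parentGraph_adj p).2 ⟨hne a.1 a.2, Or.inl rfl⟩⟩
  have edge_injective : Function.Injective edge := by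
    rintro ⟨a, ha⟩ ⟨b, hb⟩ hab
    rcases Sym2.eq_iff.1 (congrArg Subtype.val hab) with ⟨rfl, -⟩ | ⟨rfl, hba⟩
    · rfl
    · have hlt := hd _ ha
      rw [hba] at hlt
      exact absurd (hd _ hb) hlt.asymm
  have edge_surjective : Function.Surjective edge := by
    rintro ⟨e, he⟩
    induction e using Sym2.ind with
    | h a b =>
      obtain ⟨hab, hpa | hpb⟩ := (parentGraph_adj p).1 he
      · exact ⟨⟨a, fun h => hab (by rw [← hpa, h, hr])⟩, Subtype.ext (by simp [edge, hpa])⟩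
      · exact ⟨⟨b, fun h => hab (by rw [← hpb, h, hr])⟩, Subtype.ext (by simp [edge, hpb])⟩
  classical
  refine isTree_iff_connected_and_card.2 ⟨?_, ?_⟩
  · exact (induceUnivIso _).connected_iff.1 <|
      parentGraph_induce_connected (Set.mem_univ r) fun a _ ha => ⟨trivial, hd a ha⟩
  · rw [← Nat.card_congr (Equiv.ofBijective edge ⟨edge_injective, edge_surjective⟩),
      ← Finite.card_option, Nat.card_congr (Equiv.optionSubtypeNe r)]

end ParentGraph

open Function

structure AbstractRelations {V : Type*} (prec inc ov par : V → V → Prop) : Prop where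
  irrefl : ∀ v, ¬ prec v v
  trans : ∀ u v w, prec u v → prec v w → prec u w
  forest : ∀ a b v, prec a v → prec b v → a = b ∨ prec a b ∨ prec b a
  prec_iff : ∀ x y, prec x y ↔ (inc x y ∨ ov x y ∨ par x y)
  inc_not_ov : ∀ x y, inc x y → ¬ ov x y
  inc_not_par : ∀ x y, inc x y → ¬ par x y
  ov_not_par : ∀ x y, ov x y → ¬ par x y
  inc_inc : ∀ x y z, inc x y → inc y z → inc x z
  inc_ov : ∀ x y z, inc x y → ov y z → inc x z ∨ ov x z
  ov_inc : ∀ x y z, ov x y → inc y z → ov x z ∨ par x z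
  par_prec : ∀ x y z, par x y → prec y z → par x z

namespace AbstractRelations

variable {V : Type*} {prec inc ov par : V → V → Prop}

theorem comap {W : Type*} (h : AbstractRelations prec inc ov par) {f : W → V}
    (hf : Injective f) : AbstractRelations (prec on f) (inc on f) (ov on f) (par on f) where
  irrefl a := h.irrefl (f a)
  trans _ _ _ := h.trans _ _ _
  forest _ _ _ ha hb := (h.forest _ _ _ ha hb).imp_left (hf ·)
  prec_iff _ _ := h.prec_iff _ _
  inc_not_ov _ _ := h.inc_not_ov _ _
  inc_not_par _ _ := h.inc_not_par _ _
  ov_not_par _ _ := h.ov_not_par _ _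
  inc_inc _ _ _ := h.inc_inc _ _ _
  inc_ov _ _ _ := h.inc_ov _ _ _
  ov_inc _ _ _ := h.ov_inc _ _ _
  par_prec _ _ _ := h.par_prec _ _ _

end AbstractRelations

theorem and_iff_of_or_of_exclusive {P₁ P₂ P₃ Q₁ Q₂ Q₃ : Prop} (h : P₁ ∨ P₂ ∨ P₃)
    (h₁ : P₁ → Q₁) (h₂ : P₂ → Q₂) (h₃ : P₃ → Q₃)
    (h₁₂ : Q₁ → ¬ Q₂) (h₁₃ : Q₁ → ¬ Q₃) (h₂₃ : Q₂ → ¬ Q₃) :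
    (P₁ ↔ Q₁) ∧ (P₂ ↔ Q₂) ∧ (P₃ ↔ Q₃) := by
  tauto

section Construction

variable {V : Type*}

def IsParentOf (prec : V → V → Prop) (m x : V) : Prop :=
  prec m x ∧ ∀ a, prec a x → a = m ∨ prec a m

/- The tree lives on `Option (V × Bool)`: `none` is the root `r`, `some (x, false)` is `u_x` and
`some (x, true)` is the leaf `v_x`. -/

open Classical in
noncomputable def treeParent (prec : V → V → Prop) : Option (V × Bool) → Option (V × Bool)
  | none => none
  | some (x, true) => some (x, false)
  | some (x, false) => if h : ∃ m, IsParentOf prec m x then some (h.choose, false) else none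

noncomputable def treeDepth (prec : V → V → Prop) : Option (V × Bool) → ℕ
  | none => 0
  | some (x, b) => {a | prec a x}.ncard + 1 + b.toNat

def subtree (inc ov : V → V → Prop) (x : V) : Set (Option (V × Bool)) := fun t =>
  match t with
  | none => False
  | some (w, b) => w = x ∨ inc x w ∨ (b = false ∧ ov x w)

variable {prec inc ov par : V → V → Prop}

@[simp]
theorem mem_subtree {x w : V} {b : Bool} :
    some (w, b) ∈ subtree inc ov x ↔ w = x ∨ inc x w ∨ (b = false ∧ ov x w) := Iff.rfl

theorem self_mem_subtree (x : V) (b : Bool) : some (x, b) ∈ subtree inc ov x := Or.inl rfl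

namespace AbstractRelations

variable (h : AbstractRelations prec inc ov par)
include h

theorem prec_of_inc {x y : V} (hxy : inc x y) : prec x y := (h.prec_iff x y).2 (Or.inl hxy)

theorem prec_of_ov {x y : V} (hxy : ov x y) : prec x y := (h.prec_iff x y).2 (Or.inr (Or.inl hxy))

theorem prec_of_par {x y : V} (hxy : par x y) : prec x y :=
  (h.prec_iff x y).2 (Or.inr (Or.inr hxy))

theorem not_prec_of_prec {x y : V} (hxy : prec x y) : ¬ prec y x :=
  fun hyx => h.irrefl x (h.trans _ _ _ hxy hyx)

theorem ncard_ancestors_lt [Finite V] {m x : V} (hmx : prec m x) :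
    {a | prec a m}.ncard < {a | prec a x}.ncard :=
  Set.ncard_lt_ncard ⟨fun _ ham => h.trans _ _ _ ham hmx, fun hsub => h.irrefl m (hsub hmx)⟩
    (Set.toFinite _)

/-- The parent is the strict ancestor with the most ancestors. -/
theorem exists_isParentOf [Finite V] {a x : V} (hax : prec a x) : ∃ m, IsParentOf prec m x := by
  obtain ⟨m, hmx, hmax⟩ :=
    Set.exists_max_image {a | prec a x} (fun m => {a | prec a m}.ncard) (Set.toFinite _) ⟨a, hax⟩
  refine ⟨m, hmx, fun b hbx => ?_⟩
  rcases h.forest b m x hbx hmx with hbm | hbm | hmb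
  · exact Or.inl hbm
  · exact Or.inr hbm
  · exact absurd (hmax b hbx) (h.ncard_ancestors_lt hmb).not_ge

theorem exists_treeParent_eq_of_prec [Finite V] {a x : V} (hax : prec a x) :
    ∃ m, IsParentOf prec m x ∧ treeParent prec (some (x, false)) = some (m, false) :=
  have hm := h.exists_isParentOf hax
  ⟨hm.choose, hm.choose_spec, dif_pos hm⟩

theorem treeDepth_treeParent_lt [Finite V] {t : Option (V × Bool)} (ht : t ≠ none) :
    treeDepth prec (treeParent prec t) < treeDepth prec t := by
  match t, ht with
  | some (x, true), _ => simp [treeParent, treeDepth]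
  | some (x, false), _ =>
    by_cases hm : ∃ m, IsParentOf prec m x
    · simpa [treeParent, treeDepth, hm] using h.ncard_ancestors_lt hm.choose_spec.1
    · simp [treeParent, treeDepth, hm]

theorem isTree [Finite V] : (parentGraph (treeParent prec)).IsTree :=
  parentGraph_isTree rfl fun _ => h.treeDepth_treeParent_lt

theorem eq_or_prec_of_mem_subtree {x w : V} {b : Bool} (hw : some (w, b) ∈ subtree inc ov x) :
    w = x ∨ prec x w := by
  rcases hw with hw | hw | ⟨-, hw⟩
  · exact Or.inl hw
  · exact Or.inr (h.prec_of_inc hw)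
  · exact Or.inr (h.prec_of_ov hw)

theorem notMem_subtree_of_prec {x y : V} (hxy : prec x y) (b : Bool) :
    some (x, b) ∉ subtree inc ov y := fun hx =>
  (h.eq_or_prec_of_mem_subtree hx).elim (fun hyx => h.irrefl x (hyx ▸ hxy))
    (h.not_prec_of_prec hxy)

theorem notMem_subtree_of_par {x w : V} (hxw : par x w) (b : Bool) :
    some (w, b) ∉ subtree inc ov x := by
  rintro (rfl | hinc | ⟨-, hov⟩)
  · exact h.irrefl w (h.prec_of_par hxw)
  · exact h.inc_not_par x w hinc hxw
  · exact h.ov_not_par x w hov hxw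

theorem subtree_subset_of_inc {x y : V} (hxy : inc x y) :
    subtree inc ov y ⊆ subtree inc ov x := by
  rintro (_ | ⟨w, b⟩) hw
  · exact hw.elim
  rcases hw with rfl | hyw | ⟨hb, hyw⟩
  · exact Or.inr (Or.inl hxy)
  · exact Or.inr (Or.inl (h.inc_inc x y w hxy hyw))
  · exact (h.inc_ov x y w hxy hyw).elim (Or.inr ∘ Or.inl) (fun hxw => Or.inr (Or.inr ⟨hb, hxw⟩))

theorem subtree_ssubset_of_inc {x y : V} (hxy : inc x y) :
    subtree inc ov y ⊂ subtree inc ov x :=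
  ssubset_of_subset_not_superset (h.subtree_subset_of_inc hxy) fun hsub =>
    h.notMem_subtree_of_prec (h.prec_of_inc hxy) false (hsub (Or.inl rfl))

theorem setsOverlap_subtree_of_ov {x y : V} (hxy : ov x y) :
    SetsOverlap (subtree inc ov x) (subtree inc ov y) := by
  refine ⟨⟨some (y, false), Or.inr (Or.inr ⟨rfl, hxy⟩), Or.inl rfl⟩, fun hsub => ?_, fun hsub => ?_⟩
  · exact h.notMem_subtree_of_prec (h.prec_of_ov hxy) false (hsub (Or.inl rfl))
  · rcases hsub (show some (y, true) ∈ subtree inc ov y from Or.inl rfl) with rfl | hinc | ⟨hb, -⟩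
    · exact h.irrefl y (h.prec_of_ov hxy)
    · exact h.inc_not_ov x y hinc hxy
    · exact Bool.noConfusion hb

theorem subtree_inter_eq_empty_of_par {x y : V} (hxy : par x y) :
    subtree inc ov x ∩ subtree inc ov y = ∅ := by
  refine Set.eq_empty_of_forall_notMem ?_
  rintro (_ | ⟨w, b⟩) ⟨hx, hy⟩
  · exact hx
  rcases h.eq_or_prec_of_mem_subtree hy with rfl | hyw
  · exact h.notMem_subtree_of_par hxy b hx
  · exact h.notMem_subtree_of_par (h.par_prec x y w hxy hyw) b hx

theorem subtree_realizes {x y : V} (hxy : prec x y) :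
    (inc x y ↔ subtree inc ov y ⊂ subtree inc ov x) ∧
    (ov x y ↔ SetsOverlap (subtree inc ov x) (subtree inc ov y)) ∧
    (par x y ↔ subtree inc ov x ∩ subtree inc ov y = ∅) :=
  and_iff_of_or_of_exclusive ((h.prec_iff x y).1 hxy) h.subtree_ssubset_of_inc
    h.setsOverlap_subtree_of_ov h.subtree_inter_eq_empty_of_par
    (fun hss hov => hov.2.2 hss.subset)
    (fun hss hempty => (Set.eq_empty_iff_forall_notMem.1 hempty) (some (y, false))
      ⟨hss.subset (self_mem_subtree y false), self_mem_subtree y false⟩)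
    (fun hov => hov.1.ne_empty)

theorem eq_or_prec_or_prec_of_inter_nonempty {x y : V}
    (hxy : (subtree inc ov x ∩ subtree inc ov y).Nonempty) : x = y ∨ prec x y ∨ prec y x := by
  obtain ⟨_ | ⟨w, b⟩, hx, hy⟩ := hxy
  · exact hx.elim
  rcases h.eq_or_prec_of_mem_subtree hx with rfl | hxw <;>
    rcases h.eq_or_prec_of_mem_subtree hy with rfl | hyw
  · exact Or.inl rfl
  · exact Or.inr (Or.inr hyw)
  · exact Or.inr (Or.inl hxw)
  · exact h.forest x y w hxw hyw

theorem not_subtree_subset_inter_of_ov {x y : V} (hxy : ov x y) (z : V) :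
    ¬ subtree inc ov z ⊆ subtree inc ov x ∩ subtree inc ov y := fun hsub => by
  obtain ⟨hx, hy⟩ := hsub (self_mem_subtree z true)
  simp only [mem_subtree, Bool.true_eq_false, false_and, or_false] at hx hy
  rcases hy with rfl | hyz
  · rcases hx with rfl | hxz
    · exact h.irrefl z (h.prec_of_ov hxy)
    · exact h.inc_not_ov x z hxz hxy
  · have hxz : inc x z := hx.resolve_left fun hzx =>
      h.not_prec_of_prec (h.prec_of_ov hxy) (hzx ▸ h.prec_of_inc hyz)
    exact (h.ov_inc x y z hxy hyz).elim (h.inc_not_ov x z hxz) (h.inc_not_par x z hxz)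

theorem not_exists_setsOverlap_subtree_subset_inter :
    ¬ ∃ x y z, SetsOverlap (subtree inc ov x) (subtree inc ov y) ∧
      subtree inc ov z ⊆ subtree inc ov x ∩ subtree inc ov y := by
  rintro ⟨x, y, z, hov, hsub⟩
  rcases h.eq_or_prec_or_prec_of_inter_nonempty hov.1 with rfl | hxy | hyx
  · exact hov.2.1 subset_rfl
  · exact h.not_subtree_subset_inter_of_ov ((h.subtree_realizes hxy).2.1.2 hov) z hsub
  · exact h.not_subtree_subset_inter_of_ov ((h.subtree_realizes hyx).2.1.2 hov.symm) z
      (Set.inter_comm (subtree inc ov x) _ ▸ hsub)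

theorem treeParent_mem_subtree [Finite V] {x : V} {t : Option (V × Bool)}
    (ht : t ∈ subtree inc ov x) (htx : t ≠ some (x, false)) :
    treeParent prec t ∈ subtree inc ov x := by
  obtain _ | ⟨w, _ | _⟩ := t
  · exact ht.elim
  · have hxw : prec x w :=
      (h.eq_or_prec_of_mem_subtree ht).resolve_left (by rintro rfl; simp at htx)
    obtain ⟨m, ⟨hmw, hmax⟩, hparent⟩ := h.exists_treeParent_eq_of_prec hxw
    rw [hparent]
    rcases hmax x hxw with rfl | hxm
    · exact self_mem_subtree x false
    rcases (h.prec_iff x m).1 hxm with hinc | hov | hpar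
    · exact Or.inr (Or.inl hinc)
    · exact Or.inr (Or.inr ⟨rfl, hov⟩)
    · exact absurd ht (h.notMem_subtree_of_par (h.par_prec x m w hpar hmw) false)
  · simp only [treeParent, mem_subtree, Bool.true_eq_false, false_and, or_false] at ht ⊢
    tauto

theorem induce_subtree_connected [Finite V] (x : V) :
    ((parentGraph (treeParent prec)).induce (subtree inc ov x)).Connected :=
  parentGraph_induce_connected (d := treeDepth prec) (self_mem_subtree x false) fun t ht htx =>
    ⟨h.treeParent_mem_subtree ht htx, h.treeDepth_treeParent_lt (by rintro rfl; exact ht)⟩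

end AbstractRelations

end Construction

/-- **Realizing the abstract relations by subtrees of a tree (Lemma `subtree-game`,
constructive direction).**  Let `V` be a finite set equipped with the strict ancestor
order `prec` of a rooted forest (irreflexive, transitive, ancestors of any vertex totally
ordered), partitioned into three pairwise disjoint relations `inc` (⊑), `ov` (≬), `par`
(∥) satisfying axioms (A1)–(A4).  Then there is a tree `T` and a family `(S x)` of
subtrees of `T` (nonempty sets inducing connected subgraphs) such that for all `x ≺ y`:
`S y ⊊ S x` iff `x ⊑ y`; `S x` and `S y` overlap iff `x ≬ y`; and `S x ∩ S y = ∅` iff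
`x ∥ y`.  Moreover the family is a clean overlap model: no two overlapping subtrees both
contain a third one. -/
theorem abstract_relations_realized_by_subtrees {V : Type*} [Fintype V]
    (prec inc ov par : V → V → Prop)
    (hirr : ∀ v, ¬ prec v v)
    (htrans : ∀ u v w, prec u v → prec v w → prec u w)
    (hforest : ∀ a b v, prec a v → prec b v → a = b ∨ prec a b ∨ prec b a)
    (hpart : ∀ x y, prec x y ↔ (inc x y ∨ ov x y ∨ par x y))
    (hdisj₁ : ∀ x y, inc x y → ¬ ov x y) (hdisj₂ : ∀ x y, inc x y → ¬ par x y)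
    (hdisj₃ : ∀ x y, ov x y → ¬ par x y)
    (hA1 : ∀ x y z, inc x y → inc y z → inc x z)
    (hA2 : ∀ x y z, inc x y → ov y z → inc x z ∨ ov x z)
    (hA3 : ∀ x y z, ov x y → inc y z → ov x z ∨ par x z)
    (hA4 : ∀ x y z, par x y → prec y z → par x z) :
    ∃ (T : Type) (tr : SimpleGraph T), tr.IsTree ∧
      ∃ S : V → Set T,
        (∀ x, (S x).Nonempty ∧ (tr.induce (S x)).Connected) ∧
        (∀ x y, prec x y →
          ((inc x y ↔ S y ⊂ S x) ∧
           (ov x y ↔ SetsOverlap (S x) (S y)) ∧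
           (par x y ↔ S x ∩ S y = ∅))) ∧
        (¬ ∃ x y z, SetsOverlap (S x) (S y) ∧ S z ⊆ S x ∩ S y) := by
  -- `T` must live in `Type`, so the construction is carried out on a copy of `V` in `Type`
  let e := (Fintype.equivFin V).symm
  have h : AbstractRelations (prec on e) (inc on e) (ov on e) (par on e) :=
    AbstractRelations.comap ⟨hirr, htrans, hforest, hpart, hdisj₁, hdisj₂, hdisj₃, hA1, hA2, hA3,
      hA4⟩ e.injective
  refine ⟨_, parentGraph (treeParent (prec on e)), h.isTree,
    fun x => subtree (inc on e) (ov on e) (e.symm x),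
    fun x => ⟨⟨_, self_mem_subtree _ false⟩, h.induce_subtree_connected _⟩, fun x y hxy => ?_,
    fun ⟨x, y, z, hxyz⟩ => h.not_exists_setsOverlap_subtree_subset_inter ⟨_, _, _, hxyz⟩⟩
  simpa [onFun] using h.subtree_realizes (x := e.symm x) (y := e.symm y) (by simpa [onFun])
end

section
/- Let V be a set with a strict partial order ≺ (the ancestor order of a rooted forest) partitioned into relations ⊑, ≬, ∥ satisfying axioms A1–A4, and let G be the graph on V with edges the pairs related by ≬ (in either direction). Define on-line a set P of primary vertices: a newly presented vertex z is secondary if there exist x, y with y ∈ P, x ≬ y, x ≬ z, and y ⊑ z; otherwise z is primary. For primary y, let S(y) = {y} ∪ {secondary z : y ⊑ z and ∃x, x ≬ y and x ≬ z}. Then every vertex z belongs to S(p) for exactly one primary p. -/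
/-- **Primary vertices and their secondary sets (unique decomposition).**
Let `V` carry the strict ancestor order `prec` of a rooted forest, partitioned into
pairwise disjoint relations `inc` (⊑), `ov` (≬), `par` (∥) satisfying axioms (A1)–(A4).
Let `Primary` be the on-line classification: a vertex `z` is secondary iff there are
`x, y` with `y` primary, `x ≬ y`, `x ≬ z`, and `y ⊑ z`; otherwise `z` is primary
(this is expressed by the fixpoint hypothesis `hP`).  For a primary `p`, the set `S(p)`
consists of `p` and all secondary `z` with `p ⊑ z` such that some `x` satisfies `x ≬ p`
and `x ≬ z`.  Then every vertex `z` belongs to `S(p)` for exactly one primary `p`. -/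
theorem primary_secondary_unique {V : Type*} [Fintype V]
    (prec inc ov par : V → V → Prop)
    (hirr : ∀ v, ¬ prec v v)
    (htrans : ∀ u v w, prec u v → prec v w → prec u w)
    (hforest : ∀ a b v, prec a v → prec b v → a = b ∨ prec a b ∨ prec b a)
    (hpart : ∀ x y, prec x y ↔ (inc x y ∨ ov x y ∨ par x y))
    (hdisj₁ : ∀ x y, inc x y → ¬ ov x y) (hdisj₂ : ∀ x y, inc x y → ¬ par x y)
    (hdisj₃ : ∀ x y, ov x y → ¬ par x y)
    (hA1 : ∀ x y z, inc x y → inc y z → inc x z)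
    (hA2 : ∀ x y z, inc x y → ov y z → inc x z ∨ ov x z)
    (hA3 : ∀ x y z, ov x y → inc y z → ov x z ∨ par x z)
    (hA4 : ∀ x y z, par x y → prec y z → par x z)
    (Primary : V → Prop)
    (hP : ∀ z, Primary z ↔ ¬ ∃ x y, Primary y ∧ ov x y ∧ ov x z ∧ inc y z) :
    ∀ z : V, ∃! p : V, Primary p ∧
      (z = p ∨ (¬ Primary z ∧ inc p z ∧ ∃ x, ov x p ∧ ov x z)) := by
  -- key lemma: two distinct comparable primaries can't both dominate z with witnesses
  have aux : ∀ p₁ p₂ z x₁, Primary p₁ → Primary p₂ → inc p₁ z → inc p₂ z →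
      ov x₁ p₁ → ov x₁ z → prec p₁ p₂ → False := by
    intro p₁ p₂ z x₁ hP₁ hP₂ hi₁ hi₂ hox₁ hoxz hlt
    have hp₂z : prec p₂ z := (hpart p₂ z).2 (Or.inl hi₂)
    rcases (hpart p₁ p₂).1 hlt with h | h | h
    · rcases hA3 x₁ p₁ p₂ hox₁ h with h' | h'
      · exact ((hP p₂).1 hP₂) ⟨x₁, p₁, hP₁, hox₁, h', h⟩
      · exact hdisj₃ x₁ z hoxz (hA4 x₁ p₂ z h' hp₂z)
    · rcases hA3 p₁ p₂ z h hi₂ with h' | h'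
      · exact hdisj₁ p₁ z hi₁ h'
      · exact hdisj₂ p₁ z hi₁ h'
    · exact hdisj₂ p₁ z hi₁ (hA4 p₁ p₂ z h hp₂z)
  intro z
  by_cases hz : Primary z
  · refine ⟨z, ⟨hz, Or.inl rfl⟩, ?_⟩
    rintro q ⟨hq, rfl | ⟨hnz, _⟩⟩
    · rfl
    · exact absurd hz hnz
  · obtain ⟨x, y, hPy, hoxy, hoxz, hiyz⟩ := not_not.mp (fun h => hz ((hP z).2 h))
    refine ⟨y, ⟨hPy, Or.inr ⟨hz, hiyz, x, hoxy, hoxz⟩⟩, ?_⟩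
    rintro q ⟨hPq, rfl | ⟨_, hiqz, x', hox'q, hox'z⟩⟩
    · exact absurd hPq hz
    · rcases hforest q y z ((hpart q z).2 (Or.inl hiqz)) ((hpart y z).2 (Or.inl hiyz))
        with h | h | h
      · exact h
      · exact absurd h (fun h => aux q y z x' hPq hPy hiqz hiyz hox'q hox'z h)
      · exact absurd h (fun h => aux y q z x hPy hPq hiyz hiqz hoxy hoxz h)
end

section
/- In the setting of axioms A1–A4, the primary vertices P of a graph G with ω(G) ≤ k can be colored on-line with k colors so that for any x, y, z ∈ P of the same color with x ≬ y ≺ z, one has x ∥ z or y ∥ z; in particular this coloring of G[P] is triangle-free. The key combinatorial facts are: (1) if x ≬ y ≺ y′ ≺ z, and x ∥ y′ or y ∥ y′, then x ∥ z or y ∥ z; (2) if x, y, z ∈ P and x ≬ y ⊑ z, then x ∥ z. -/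
/-- **Coloring the primary vertices (Lemma `primary-coloring-1`).**
With relations `inc` (⊑), `ov` (≬), `par` (∥) partitioning the forest ancestor order
`prec` of a rooted forest on `V(G)` and satisfying (A1)–(A4), with edges of `G` the
`≬`-related pairs, with `ω(G) ≤ k`, and with `Primary` the set of primary vertices
(`z` is primary iff there are no `x, y` with `y` primary, `x ≬ y`, `x ≬ z`, `y ⊑ z`),
the primary vertices can be colored with `k` colors so that any same-colored primary
`x, y, z` with `x ≬ y ≺ z` satisfy `x ∥ z` or `y ∥ z`; in particular the coloring of
`G[P]` is triangle-free. -/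
theorem primary_coloring {V : Type*} [Fintype V] (k : ℕ)
    (prec inc ov par : V → V → Prop)
    (hirr : ∀ v, ¬ prec v v)
    (htrans : ∀ u v w, prec u v → prec v w → prec u w)
    (hforest : ∀ a b v, prec a v → prec b v → a = b ∨ prec a b ∨ prec b a)
    (hpart : ∀ x y, prec x y ↔ (inc x y ∨ ov x y ∨ par x y))
    (hdisj₁ : ∀ x y, inc x y → ¬ ov x y) (hdisj₂ : ∀ x y, inc x y → ¬ par x y)
    (hdisj₃ : ∀ x y, ov x y → ¬ par x y)
    (hA1 : ∀ x y z, inc x y → inc y z → inc x z)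
    (hA2 : ∀ x y z, inc x y → ov y z → inc x z ∨ ov x z)
    (hA3 : ∀ x y z, ov x y → inc y z → ov x z ∨ par x z)
    (hA4 : ∀ x y z, par x y → prec y z → par x z)
    (G : SimpleGraph V)
    (hG : ∀ u v, G.Adj u v ↔ ov u v ∨ ov v u)
    (homega : ∀ s : Finset V, G.IsClique (↑s : Set V) → s.card ≤ k)
    (Primary : V → Prop)
    (hP : ∀ z, Primary z ↔ ¬ ∃ x y, Primary y ∧ ov x y ∧ ov x z ∧ inc y z) :
    ∃ φ : V → Fin k,
      (∀ x y z, Primary x → Primary y → Primary z →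
        φ x = φ z → φ y = φ z → ov x y → prec y z → par x z ∨ par y z) ∧
      ¬ ∃ x y z, Primary x ∧ Primary y ∧ Primary z ∧
        φ x = φ y ∧ φ y = φ z ∧ ov x y ∧ ov x z ∧ ov y z := by
  classical
  -- Key fact (2): if x ≬ y ⊑ z with y, z primary, then x ∥ z.
  have step1 : ∀ x y z, Primary y → Primary z → ov x y → inc y z → par x z := by
    intro x y z hy hz hxy hyz
    rcases hA3 x y z hxy hyz with h | h
    · exact absurd ⟨x, y, hy, hxy, h, hyz⟩ ((hP z).mp hz)
    · exact h
  -- The "bad" set for a presented vertex z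
  let Bd : V → V → Prop := fun z y => Primary z ∧ Primary y ∧ prec y z ∧
    ∃ x, Primary x ∧ ov x y ∧ ¬ par x z ∧ ¬ par y z
  let Y : V → Finset V := fun z => Finset.univ.filter (Bd z)
  have hmem : ∀ z y, y ∈ Y z ↔ Bd z y := by
    intro z y; simp [Y, Finset.mem_filter]
  have hYprec : ∀ z y, y ∈ Y z → prec y z := fun z y h => ((hmem z y).mp h).2.2.1
  -- each y ∈ Y z overlaps z
  have hovz : ∀ z y, y ∈ Y z → ov y z := by
    intro z y h
    obtain ⟨hPz, hPy, hpz, x, hPx, hxy, hxz, hyz⟩ := (hmem z y).mp h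
    rcases (hpart y z).mp hpz with h' | h' | h'
    · exact absurd (step1 x y z hPy hPz hxy h') hxz
    · exact h'
    · exact absurd h' hyz
  -- overlap within Y z
  have hYY : ∀ z y y', y ∈ Y z → y' ∈ Y z → prec y y' → ov y y' := by
    intro z y y' hy hy' hyy'
    obtain ⟨hPz, hPy, hpz, x, hPx, hxy, hxz, hyz⟩ := (hmem z y).mp hy
    obtain ⟨_, hPy', hpz', _⟩ := (hmem z y').mp hy'
    rcases (hpart y y').mp hyy' with h | h | h
    · exact absurd (hA4 x y' z (step1 x y y' hPy hPy' hxy h) hpz') hxz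
    · exact h
    · exact absurd (hA4 y y' z h hpz') hyz
  -- the bad set plus z is a clique
  have hclique : ∀ z, G.IsClique (↑(insert z (Y z)) : Set V) := by
    intro z a ha b hb hab
    simp only [Finset.coe_insert, Set.mem_insert_iff, Finset.mem_coe] at ha hb
    rcases ha with rfl | ha
    · rcases hb with rfl | hb
      · exact absurd rfl hab
      · exact (hG a b).mpr (Or.inr (hovz a b hb))
    · rcases hb with rfl | hb
      · exact (hG a b).mpr (Or.inl (hovz b a ha))
      · rcases hforest a b z (hYprec z a ha) (hYprec z b hb) with rfl | h | h
        · exact absurd rfl hab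
        · exact (hG a b).mpr (Or.inl (hYY z a b ha hb h))
        · exact (hG a b).mpr (Or.inr (hYY z b a hb ha h))
  have hcard : ∀ z, (Y z).card < k := by
    intro z
    have hz : z ∉ Y z := fun h => hirr z (hYprec z z h)
    have := homega (insert z (Y z)) (hclique z)
    rw [Finset.card_insert_of_notMem hz] at this
    omega
  have hwf : WellFounded prec := by
    have : IsTrans V prec := ⟨htrans⟩
    have : IsIrrefl V prec := ⟨hirr⟩
    exact Finite.wellFounded_of_trans_of_irrefl prec
  -- greedy coloring by well-founded recursion
  let F : ∀ z : V, (∀ y, prec y z → Fin k) → Fin k := fun z rec =>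
    ((Finset.univ : Finset (Fin k)) \
      ((Y z).attach.image fun y => rec y.1 (hYprec z y.1 y.2))).min'
      (by
        apply Finset.card_pos.mp
        have h1 : ((Y z).attach.image fun y => rec y.1 (hYprec z y.1 y.2)).card
            ≤ (Y z).card := by
          calc _ ≤ (Y z).attach.card := Finset.card_image_le
          _ = (Y z).card := Finset.card_attach
        have h2 := hcard z
        have h3 := Finset.card_sdiff_of_subset
          (Finset.subset_univ ((Y z).attach.image fun y => rec y.1 (hYprec z y.1 y.2)))
        rw [h3]
        simp only [Finset.card_univ, Fintype.card_fin]
        omega)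
  let φ : V → Fin k := fun z => hwf.fix F z
  have hφeq : ∀ z, φ z = F z (fun y _ => φ y) := fun z => hwf.fix_eq F z
  have key : ∀ z y, y ∈ Y z → φ y ≠ φ z := by
    intro z y hy
    have hz : φ z ∈ (Finset.univ : Finset (Fin k)) \
        ((Y z).attach.image fun y => φ y.1) := by
      rw [hφeq z]
      exact Finset.min'_mem _ _
    rw [Finset.mem_sdiff, Finset.mem_image] at hz
    intro he
    exact hz.2 ⟨⟨y, hy⟩, Finset.mem_attach _ _, he⟩
  have main : ∀ x y z, Primary x → Primary y → Primary z →
      φ x = φ z → φ y = φ z → ov x y → prec y z → par x z ∨ par y z := by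
    intro x y z hx hy hz hxz hyz hov hprec
    by_contra hcon
    push_neg at hcon
    exact key z y ((hmem z y).mpr ⟨hz, hy, hprec, x, hx, hov, hcon.1, hcon.2⟩) hyz
  refine ⟨φ, main, ?_⟩
  rintro ⟨x, y, z, hx, hy, hz, e1, e2, hxy, hxz, hyz⟩
  have hprec : prec y z := (hpart y z).mpr (Or.inr (Or.inl hyz))
  rcases main x y z hx hy hz (e1.trans e2) e2 hxy hprec with h | h
  · exact hdisj₃ x z hxz h
  · exact hdisj₃ y z hyz h
end

section
/- Let P′ be a set of vertices (with relations ⊑, ≬, ∥ satisfying A1–A4 on a total presentation order ≺) such that any x, y, z ∈ P′ with x ≬ y ≺ z satisfy x ∥ z or y ∥ z. Let R be the set of vertices of P′ with no ≬-neighbor to the right (i.e., no z ∈ P′ with x ≬ z). Then every vertex of P′ \ R has at most one ≬-neighbor to the right within P′ \ R; in particular, the graph on P′ \ R with edges the ≬-pairs is a forest. -/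
/-!
If `x ≬ z₁` and `x ≬ z₂` with `z₁ < z₂`, the hypothesis forces `z₁ ∥ z₂`, and then (A4) leaves
no room for a `≬`-neighbour `w` of `z₁`: for `w < z₂` the hypothesis gives `x ∥ w`, hence
`x ∥ z₂`; for `w ≥ z₂` it gives `z₁ ∥ w`. So a non-terminal vertex has at most one non-terminal
`≬`-neighbour to its right. A graph in which every vertex has at most one larger neighbour is a
forest: the least vertex of a cycle would have two.
-/

namespace SimpleGraph

variable {V : Type*}

theorem fromRel_adj_of_lt [Preorder V] {r : V → V → Prop} (hr : ∀ x y, r x y → x < y)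
    {a b : V} (hab : (fromRel r).Adj a b) (hlt : a < b) : r a b :=
  ((fromRel_adj r a b).1 hab).2.resolve_right fun hba => (hr b a hba).not_gt hlt

theorem isAcyclic_of_subsingleton_greater_neighbors [LinearOrder V] {G : SimpleGraph V}
    (h : ∀ v, {w | v < w ∧ G.Adj v w}.Subsingleton) : G.IsAcyclic := by
  intro v c hc
  obtain ⟨m, hm, hmin⟩ := c.support.toFinset.exists_min_image id ⟨v, by simp⟩
  rw [List.mem_toFinset] at hm
  set c' := c.rotate m hm
  have hc' : c'.IsCycle := hc.rotate hm
  have hgt : ∀ w ∈ c'.support, G.Adj m w → m < w := fun w hw hadj =>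
    (hmin w (by simpa [c'] using hw)).lt_of_ne hadj.ne
  have hsnd : c'.snd ∈ {w | m < w ∧ G.Adj m w} :=
    ⟨hgt _ (c'.getVert_mem_support 1) (c'.adj_snd hc'.not_nil), c'.adj_snd hc'.not_nil⟩
  have hpen : c'.penultimate ∈ {w | m < w ∧ G.Adj m w} :=
    ⟨hgt _ (c'.getVert_mem_support _) (c'.adj_penultimate hc'.not_nil).symm,
      (c'.adj_penultimate hc'.not_nil).symm⟩
  exact hc'.snd_ne_penultimate (h m hsnd hpen)

end SimpleGraph

section OverlapOrder

variable {V : Type*} [LinearOrder V] {ov par : V → V → Prop}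
  (hov_lt : ∀ x y, ov x y → x < y) (hdisj : ∀ x y, ov x y → ¬ par x y)
  (hA4 : ∀ x y z, par x y → y < z → par x z)
  (hcond : ∀ x y z, ov x y → y < z → par x z ∨ par y z)
include hov_lt hdisj hA4 hcond

theorem not_lt_of_ov_of_ov_of_ov {x y z w : V} (hyw : ov y w) (hxy : ov x y) (hxz : ov x z) :
    ¬ y < z := by
  intro hyz
  have hpar_yz : par y z := (hcond x y z hxy hyz).resolve_left (hdisj x z hxz)
  rcases lt_or_ge w z with hwz | hzw
  · have hpar_xw : par x w := (hcond x y w hxy (hov_lt y w hyw)).resolve_right (hdisj y w hyw)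
    exact hdisj x z hxz (hA4 x w z hpar_xw hwz)
  · rcases hzw.eq_or_lt with rfl | hzw
    · exact hdisj y z hyw hpar_yz
    · exact hdisj y w hyw (hA4 y z w hpar_yz hzw)

theorem eq_of_ov_of_ov {x z₁ z₂ : V} (h₁ : ∃ w, ov z₁ w) (h₂ : ∃ w, ov z₂ w)
    (hx₁ : ov x z₁) (hx₂ : ov x z₂) : z₁ = z₂ := by
  obtain ⟨w₁, hw₁⟩ := h₁
  obtain ⟨w₂, hw₂⟩ := h₂
  refine le_antisymm (not_lt.1 ?_) (not_lt.1 ?_)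
  · exact not_lt_of_ov_of_ov_of_ov hov_lt hdisj hA4 hcond hw₂ hx₂ hx₁
  · exact not_lt_of_ov_of_ov_of_ov hov_lt hdisj hA4 hcond hw₁ hx₁ hx₂

end OverlapOrder

theorem nonterminal_primaries_forest_general {V : Type*} [LinearOrder V]
    (inc ov par : V → V → Prop)
    (hpart : ∀ x y : V, x < y ↔ (inc x y ∨ ov x y ∨ par x y))
    (hdisj₃ : ∀ x y, ov x y → ¬ par x y)
    (hA4 : ∀ x y z, par x y → y < z → par x z)
    (hcond : ∀ x y z, ov x y → y < z → par x z ∨ par y z) :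
    (∀ x z₁ z₂ : V, (∃ w, ov z₁ w) → (∃ w, ov z₂ w) →
        ov x z₁ → ov x z₂ → z₁ = z₂) ∧
    (SimpleGraph.fromRel
        (fun a b : {x : V // ∃ w, ov x w} => ov a.1 b.1)).IsAcyclic := by
  have hov_lt : ∀ x y, ov x y → x < y := fun x y h => (hpart x y).2 (Or.inr (Or.inl h))
  have hunique : ∀ x z₁ z₂ : V, (∃ w, ov z₁ w) → (∃ w, ov z₂ w) →
      ov x z₁ → ov x z₂ → z₁ = z₂ := fun _ _ _ =>
    eq_of_ov_of_ov hov_lt hdisj₃ hA4 hcond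
  refine ⟨hunique, SimpleGraph.isAcyclic_of_subsingleton_greater_neighbors fun a b hb c hc => ?_⟩
  have hov_lt' : ∀ a b : {x : V // ∃ w, ov x w}, ov a.1 b.1 → a < b := fun a b => hov_lt a b
  exact Subtype.ext <| hunique a b c b.2 c.2
    (SimpleGraph.fromRel_adj_of_lt hov_lt' hb.2 hb.1)
    (SimpleGraph.fromRel_adj_of_lt hov_lt' hc.2 hc.1)

/-- **The non-terminal primary vertices induce a forest (Lemma `primary-coloring-2`,
structural part).**  Let `P′` be a set of vertices with a strict total presentation order
`<`, partitioned into pairwise disjoint relations `inc` (⊑), `ov` (≬), `par` (∥)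
satisfying (A1)–(A4), and suppose any `x ≬ y < z` satisfy `x ∥ z` or `y ∥ z`.
Let `R` be the set of vertices with no `≬`-neighbor to the right.  Then every vertex of
`P′ ∖ R` has at most one `≬`-neighbor to the right within `P′ ∖ R`; in particular the
graph on `P′ ∖ R` whose edges are the `≬`-pairs is a forest (acyclic). -/
theorem nonterminal_primaries_forest {V : Type*} [Fintype V] [LinearOrder V]
    (inc ov par : V → V → Prop)
    (hpart : ∀ x y : V, x < y ↔ (inc x y ∨ ov x y ∨ par x y))
    (hdisj₁ : ∀ x y, inc x y → ¬ ov x y) (hdisj₂ : ∀ x y, inc x y → ¬ par x y)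
    (hdisj₃ : ∀ x y, ov x y → ¬ par x y)
    (hA1 : ∀ x y z, inc x y → inc y z → inc x z)
    (hA2 : ∀ x y z, inc x y → ov y z → inc x z ∨ ov x z)
    (hA3 : ∀ x y z, ov x y → inc y z → ov x z ∨ par x z)
    (hA4 : ∀ x y z, par x y → y < z → par x z)
    (hcond : ∀ x y z, ov x y → y < z → par x z ∨ par y z) :
    (∀ x z₁ z₂ : V, (∃ w, ov z₁ w) → (∃ w, ov z₂ w) →
        ov x z₁ → ov x z₂ → z₁ = z₂) ∧
    (SimpleGraph.fromRel
        (fun a b : {x : V // ∃ w, ov x w} => ov a.1 b.1)).IsAcyclic :=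
  nonterminal_primaries_forest_general inc ov par hpart hdisj₃ hA4 hcond
end

section
/- Define sequences by s_{1,ℓ} = 1, s_{k,2} = s_{k−1,2m} for k ≥ 2, and s_{k,ℓ} ≤ 2 s_{k,ℓ−1} + s_{k−1,2m} for k ≥ 2 and 3 ≤ ℓ ≤ 2m; and c_{1,ℓ} = 0, c_{k,2} = c_{k−1,2m}, c_{k,ℓ} ≤ 2 c_{k,ℓ−1} + c_{k−1,2m} + 1. Then s_{k,2m} ≤ (2^{2m−1} − 1)^{k−1} and c_{k,2m} ≤ (2^{2m−1})^{k−1} − 1. -/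
/-- **Counting vertices and tests of the recursive strategy.**  Let `m ≥ 1` and let
`s k ℓ` and `c k ℓ` satisfy the recurrences: `s 1 ℓ = 1`, `s k 2 = s (k-1) (2m)` for
`k ≥ 2`, and `s k ℓ ≤ 2·s k (ℓ-1) + s (k-1) (2m)` for `k ≥ 2` and `3 ≤ ℓ ≤ 2m`;
`c 1 ℓ = 0`, `c k 2 = c (k-1) (2m)` for `k ≥ 2`, and
`c k ℓ ≤ 2·c k (ℓ-1) + c (k-1) (2m) + 1` for `k ≥ 2` and `3 ≤ ℓ ≤ 2m`.
Then `s k (2m) ≤ (2^(2m-1) - 1)^(k-1)` and `c k (2m) ≤ (2^(2m-1))^(k-1) - 1`. -/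
theorem strategy_size_bounds (m : ℕ) (hm : 1 ≤ m) (s c : ℕ → ℕ → ℕ)
    (hs1 : ∀ ℓ, s 1 ℓ = 1)
    (hs2 : ∀ k, 2 ≤ k → s k 2 = s (k - 1) (2 * m))
    (hs3 : ∀ k ℓ, 2 ≤ k → 3 ≤ ℓ → ℓ ≤ 2 * m →
      s k ℓ ≤ 2 * s k (ℓ - 1) + s (k - 1) (2 * m))
    (hc1 : ∀ ℓ, c 1 ℓ = 0)
    (hc2 : ∀ k, 2 ≤ k → c k 2 = c (k - 1) (2 * m))
    (hc3 : ∀ k ℓ, 2 ≤ k → 3 ≤ ℓ → ℓ ≤ 2 * m →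
      c k ℓ ≤ 2 * c k (ℓ - 1) + c (k - 1) (2 * m) + 1) :
    ∀ k, 1 ≤ k →
      s k (2 * m) ≤ (2 ^ (2 * m - 1) - 1) ^ (k - 1) ∧
      c k (2 * m) ≤ (2 ^ (2 * m - 1)) ^ (k - 1) - 1 := by
  -- Intermediate: for k ≥ 2 and 2 ≤ ℓ ≤ 2m,
  -- s k ℓ ≤ (2^(ℓ-1)-1) * s (k-1) (2m) and c k ℓ ≤ (2^(ℓ-1)-1) * (c (k-1) (2m) + 1)
  have key : ∀ k, 2 ≤ k → ∀ ℓ, 2 ≤ ℓ → ℓ ≤ 2 * m →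
      s k ℓ ≤ (2 ^ (ℓ - 1) - 1) * s (k - 1) (2 * m) ∧
      c k ℓ ≤ (2 ^ (ℓ - 1) - 1) * (c (k - 1) (2 * m) + 1) := by
    intro k hk ℓ hℓ
    induction ℓ, hℓ using Nat.le_induction with
    | base =>
      intro _
      constructor
      · rw [hs2 k hk]; norm_num
      · rw [hc2 k hk]; norm_num
    | succ ℓ hℓ ih =>
      intro hle
      obtain ⟨ihs, ihc⟩ := ih (by omega)
      have h1 : 2 ^ (ℓ + 1 - 1) - 1 = 2 * (2 ^ (ℓ - 1) - 1) + 1 := by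
        have : 2 ^ (ℓ + 1 - 1) = 2 * 2 ^ (ℓ - 1) := by
          rw [← pow_succ']
          congr 1
          omega
        have h2 : 1 ≤ 2 ^ (ℓ - 1) := Nat.one_le_two_pow
        omega
      constructor
      · have := hs3 k (ℓ + 1) hk (by omega) hle
        simp only [Nat.add_sub_cancel] at this
        calc s k (ℓ + 1) ≤ 2 * s k ℓ + s (k - 1) (2 * m) := this
          _ ≤ 2 * ((2 ^ (ℓ - 1) - 1) * s (k - 1) (2 * m)) + s (k - 1) (2 * m) := by
              gcongr
          _ = (2 * (2 ^ (ℓ - 1) - 1) + 1) * s (k - 1) (2 * m) := by ring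
          _ = (2 ^ (ℓ + 1 - 1) - 1) * s (k - 1) (2 * m) := by rw [h1]
      · have := hc3 k (ℓ + 1) hk (by omega) hle
        simp only [Nat.add_sub_cancel] at this
        calc c k (ℓ + 1) ≤ 2 * c k ℓ + c (k - 1) (2 * m) + 1 := this
          _ ≤ 2 * ((2 ^ (ℓ - 1) - 1) * (c (k - 1) (2 * m) + 1)) + c (k - 1) (2 * m) + 1 := by
              gcongr
          _ = (2 * (2 ^ (ℓ - 1) - 1) + 1) * (c (k - 1) (2 * m) + 1) := by ring
          _ = (2 ^ (ℓ + 1 - 1) - 1) * (c (k - 1) (2 * m) + 1) := by rw [h1]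
  intro k hk
  induction k with
  | zero => omega
  | succ k ih =>
    rcases Nat.lt_or_ge k 1 with hk1 | hk1
    · interval_cases k
      simp [hs1, hc1]
    · obtain ⟨ihs, ihc⟩ := ih hk1
      have hk2 : 2 ≤ k + 1 := by omega
      obtain ⟨ks, kc⟩ := key (k + 1) hk2 (2 * m) (by omega) le_rfl
      simp only [Nat.add_sub_cancel] at ks kc ⊢
      have hA : 2 ≤ 2 ^ (2 * m - 1) := by
        calc 2 = 2 ^ 1 := rfl
        _ ≤ 2 ^ (2 * m - 1) := Nat.pow_le_pow_right (by norm_num) (by omega)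
      constructor
      · calc s (k + 1) (2 * m) ≤ (2 ^ (2 * m - 1) - 1) * s k (2 * m) := ks
          _ ≤ (2 ^ (2 * m - 1) - 1) * (2 ^ (2 * m - 1) - 1) ^ (k - 1) := by gcongr
          _ = (2 ^ (2 * m - 1) - 1) ^ k := by
              rw [← pow_succ']
              congr 1
              omega
      · have hstep : c k (2 * m) + 1 ≤ (2 ^ (2 * m - 1)) ^ (k - 1) := by
          have h1 : 1 ≤ (2 ^ (2 * m - 1)) ^ (k - 1) := Nat.one_le_pow _ _ (by omega)
          omega
        calc c (k + 1) (2 * m) ≤ (2 ^ (2 * m - 1) - 1) * (c k (2 * m) + 1) := kc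
          _ ≤ (2 ^ (2 * m - 1) - 1) * (2 ^ (2 * m - 1)) ^ (k - 1) := by gcongr
          _ ≤ (2 ^ (2 * m - 1)) ^ k - 1 := by
              have hpow : (2 ^ (2 * m - 1)) * (2 ^ (2 * m - 1)) ^ (k - 1)
                  = (2 ^ (2 * m - 1)) ^ k := by
                rw [← pow_succ']
                congr 1
                omega
              have h1 : 1 ≤ (2 ^ (2 * m - 1)) ^ (k - 1) := Nat.one_le_pow _ _ (by omega)
              have := Nat.sub_mul (2 ^ (2 * m - 1)) 1 ((2 ^ (2 * m - 1)) ^ (k - 1))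
              omega
end

section
/- Let G be a graph, F a rooted forest on V(G) with every edge of G joining comparable vertices (ancestor and descendant) of F, and μ a map assigning to each vertex v a closed real interval, such that uv ∈ E(G) iff u, v are comparable in F and μ(u), μ(v) overlap. Assign to each vertex u, via depth-first search of F, integers x_u < y_u with: v a proper descendant of u implies x_u < x_v < y_v < y_u, and u, v incomparable implies [x_u,y_u] ∩ [x_v,y_v] = ∅. Then the axis-parallel rectangles R_u = μ(u) × [x_u, y_u] form an intersection model of G: R_u ∩ R_v ≠ ∅ iff uv ∈ E(G). -/
open Set

/-- **From an interval game graph to a rectangle intersection model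
(Proposition `rectangle`, key step).**  Let `G` be a graph, `anc` the strict ancestor
relation of a rooted forest `F` on `V(G)` (irreflexive, transitive, ancestors totally
ordered), and `μ` an assignment of closed intervals `[a u, b u]` such that `uv ∈ E(G)`
iff `u, v` are comparable in `F` and their intervals overlap.  Let `x, y` be DFS
entry/exit times: `x u < y u`; if `v` is a proper descendant of `u` then
`x u < x v` and `y v < y u`; and if `u, v` are incomparable then
`[x u, y u] ∩ [x v, y v] = ∅`.  Then the axis-parallel rectangles
`R u = [a u, b u] × [x u, y u]` satisfy: every edge of `G` yields intersecting
rectangles, and `R u ∩ R v ≠ ∅` iff `u, v` are comparable in `F` and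
`[a u, b u] ∩ [a v, b v] ≠ ∅`. -/
theorem game_graph_rectangle_model {V : Type*} [Fintype V] (G : SimpleGraph V)
    (anc : V → V → Prop)
    (hirr : ∀ v, ¬ anc v v)
    (htrans : ∀ u v w, anc u v → anc v w → anc u w)
    (hforest : ∀ a b v, anc a v → anc b v → a = b ∨ anc a b ∨ anc b a)
    (a b : V → ℝ) (hab : ∀ v, a v ≤ b v)
    (hmodel : ∀ u v, G.Adj u v ↔
      (anc u v ∨ anc v u) ∧ SetsOverlap (Icc (a u) (b u)) (Icc (a v) (b v)))
    (x y : V → ℝ)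
    (hxy : ∀ v, x v < y v)
    (hdesc : ∀ u v, anc u v → x u < x v ∧ y v < y u)
    (hincomp : ∀ u v, u ≠ v → ¬ anc u v → ¬ anc v u →
      Icc (x u) (y u) ∩ Icc (x v) (y v) = ∅) :
    (∀ u v, G.Adj u v →
      ((Icc (a u) (b u) ×ˢ Icc (x u) (y u)) ∩
       (Icc (a v) (b v) ×ˢ Icc (x v) (y v))).Nonempty) ∧
    (∀ u v, u ≠ v →
      (((Icc (a u) (b u) ×ˢ Icc (x u) (y u)) ∩
        (Icc (a v) (b v) ×ˢ Icc (x v) (y v))).Nonempty ↔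
       (anc u v ∨ anc v u) ∧ (Icc (a u) (b u) ∩ Icc (a v) (b v)).Nonempty)) := by
  have key : ∀ u v : V, u ≠ v →
      (((Icc (a u) (b u) ×ˢ Icc (x u) (y u)) ∩
        (Icc (a v) (b v) ×ˢ Icc (x v) (y v))).Nonempty ↔
       (anc u v ∨ anc v u) ∧ (Icc (a u) (b u) ∩ Icc (a v) (b v)).Nonempty) := by
    intro u v huv
    rw [prod_inter_prod, prod_nonempty_iff]
    constructor
    · rintro ⟨hh, hv⟩
      refine ⟨?_, hh⟩
      by_contra h
      push_neg at h
      rw [hincomp u v huv h.1 h.2] at hv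
      exact Set.not_nonempty_empty hv
    · rintro ⟨hcomp, hh⟩
      refine ⟨hh, ?_⟩
      rcases hcomp with h | h
      · obtain ⟨h1, h2⟩ := hdesc u v h
        exact ⟨x v, ⟨h1.le, ((hxy v).trans h2).le⟩, le_refl _, (hxy v).le⟩
      · obtain ⟨h1, h2⟩ := hdesc v u h
        exact ⟨x u, ⟨le_refl _, (hxy u).le⟩, h1.le, ((hxy u).trans h2).le⟩
  refine ⟨fun u v hadj => ?_, key⟩
  obtain ⟨hcomp, hov⟩ := (hmodel u v).mp hadj
  exact (key u v hadj.ne).mpr ⟨hcomp, hov.1⟩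
end
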